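/- arXiv:1512.04513 — 6 statements merged into one kernel-verified Lean document; each statement's English description precedes it below -/
import Mathlib

section
/- Let n ≥ 1 and let B = {b_1 < b_2 < ... < b_{n+1}} be an (n+1)-element subset of {1, 2, ..., 2n+1}. Then the (n+1)×(n+1) integer matrix whose entry in row i (for 0 ≤ i ≤ n) and column k (for 1 ≤ k ≤ n+1) is C(2n+1-i, 2n+2-b_k) - C(i, 2n+2-b_k) has nonzero determinant if and only if b_k ≤ 2k-1 for every k with 1 ≤ k ≤ n+1 (in particular b_1 = 1). -/
/-!
Write the column of label `b` through the lower binomial index `c = 2n+2-b`: it is the vector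
`i ↦ C(2n+1-i, c) - C(i, c)`, increasing labels become decreasing indices `c_0 > ⋯ > c_n`, and
(counting `k` from `0`) the condition `b_k ≤ 2k+1` becomes `c_k + 2k ≥ 2n+1`.

If `c_k + 2k < 2n+1`, the `k+1` triangular, hence independent, vectors
`w_s(i) = (-1)^i C(2n+1-2s, i-s)` (`s ≤ k`) are orthogonal to the columns `k, …, n`: after the
reflection `i ↦ 2n+1-i`, pairing `w_s` with the column of `c` is a `(2n+1-2s)`-th finite
difference of the polynomial `C(·, c)`, of degree `c < 2n+1-2s`. So `n+1-k` columns lie in a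
space of dimension `n-k` and the determinant vanishes.

Conversely, if `c_k + 2k ≥ 2n+1` for all `k`, then `c_0 = 2n+1` makes the first column the unit
vector `e_0`, and Pascal's rule writes every column of the complementary minor as the sum of the
columns of `c_j` and `c_j - 1` one dimension lower. Expanding multilinearly, each term is a
determinant of the same kind with non-increasing indices, so it is zero or, by induction,
positive, and choosing `c_j` exactly when `c_j + 2j = 2n+1` gives a positive term.
-/

open Finset Matrix

theorem alternating_sum_choose_mul_choose_add_eq_zero {M c : ℕ} (h : c < M) (s : ℕ) :
    ∑ u ∈ range (M + 1), (-1 : ℤ) ^ u * M.choose u * (s + u).choose c = 0 := by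
  have hΔ : (fwdDiff 1)^[M] (fun x ↦ x.choose c : ℕ → ℤ) = 0 := by
    obtain ⟨j, rfl⟩ := Nat.exists_eq_add_of_lt h
    have hc : (fwdDiff 1)^[c] (fun x ↦ x.choose c : ℕ → ℤ) = fun _ ↦ 1 := by
      simpa using fwdDiff_iter_choose 0 c
    rw [add_assoc, add_comm, Function.iterate_add_apply, Function.iterate_succ_apply, hc,
      fwdDiff_const]
    exact Function.iterate_fixed (fwdDiff_const 1 0) j
  have hsum := congrFun hΔ s
  rw [fwdDiff_iter_eq_sum_shift] at hsum
  calc _ = (-1) ^ M * ∑ u ∈ range (M + 1),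
          (-1 : ℤ) ^ (M - u) * M.choose u * (s + u).choose c := by
        rw [mul_sum]
        refine sum_congr rfl fun u hu ↦ ?_
        obtain ⟨t, rfl⟩ := Nat.exists_eq_add_of_le (Nat.le_of_lt_succ (mem_range.mp hu))
        have ht : (-1 : ℤ) ^ t * (-1) ^ t = 1 := by
          rw [← pow_add]; exact Even.neg_one_pow ⟨t, rfl⟩
        rw [Nat.add_sub_cancel_left, pow_add]
        linear_combination (-(-1) ^ u * (u + t).choose u * (s + u).choose c : ℤ) * ht
    _ = 0 := by simpa using hsum

/-- `W * M` has `m + 1` rows but at most `m` nonzero columns, so `g ᵥ* (W * M) = 0` for some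
`g ≠ 0`; the nonsingular leading block of `W` keeps `g ᵥ* W` nonzero. -/
theorem Matrix.det_eq_zero_of_mul_eq_zero_on_last_cols {R : Type*} [CommRing R] [IsDomain R]
    {m N : ℕ} (hm : m + 1 ≤ N) (M : Matrix (Fin N) (Fin N) R)
    (W : Matrix (Fin (m + 1)) (Fin N) R) (hW : (W.submatrix id (Fin.castLE hm)).det ≠ 0)
    (hWM : ∀ s (j : Fin N), m ≤ (j : ℕ) → (W * M) s j = 0) : M.det = 0 := by
  have hA : ((W * M).submatrix id (Fin.castLE hm)).det = 0 :=
    det_eq_zero_of_column_eq_zero (Fin.last m) fun s ↦ hWM s _ le_rfl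
  obtain ⟨g, hg0, hg⟩ := exists_vecMul_eq_zero_iff.mpr hA
  refine exists_vecMul_eq_zero_iff.mp ⟨g ᵥ* W, fun hx ↦ hW ?_, ?_⟩
  · exact exists_vecMul_eq_zero_iff.mp ⟨g, hg0, funext fun j ↦ congrFun hx (Fin.castLE hm j)⟩
  · rw [vecMul_vecMul]
    funext j
    by_cases hj : (j : ℕ) < m + 1
    · exact congrFun hg ⟨j, hj⟩
    · simp only [vecMul, dotProduct, Pi.zero_apply, hWM _ j (by omega), mul_zero, sum_const_zero]

theorem Matrix.det_eq_det_submatrix_succ_of_col_zero {R : Type*} [CommRing R] {n : ℕ}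
    (A : Matrix (Fin (n + 1)) (Fin (n + 1)) R) (h0 : A 0 0 = 1)
    (hA : ∀ i : Fin n, A i.succ 0 = 0) :
    A.det = (A.submatrix Fin.succ Fin.succ).det := by
  simp [det_succ_column_zero, Fin.sum_univ_succ, h0, hA]

theorem Matrix.det_of_add_cols_eq_sum_piecewise {R n : Type*} [CommRing R] [Fintype n]
    [DecidableEq n] (v w : n → n → R) :
    (of fun i j ↦ v j i + w j i).det =
      ∑ t : Finset n, (of fun i j ↦ t.piecewise v w j i).det := by
  calc (of fun i j ↦ v j i + w j i).det = detRowAlternating (v + w) := by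
        rw [← det_transpose]; rfl
    _ = ∑ t : Finset n, detRowAlternating (t.piecewise v w) :=
        detRowAlternating.map_add_univ v w
    _ = _ := sum_congr rfl fun t _ ↦ by rw [← det_transpose]; rfl

theorem StrictAnti.antitone_piecewise_sub_one {ι : Type*} [PartialOrder ι] [DecidableEq ι]
    {d : ι → ℕ} (hd : StrictAnti d) (t : Finset ι) :
    Antitone (t.piecewise d fun j ↦ d j - 1) := by
  intro a b hab
  rcases hab.lt_or_eq with hab | rfl
  · have := hd hab
    simp only [piecewise]
    split_ifs <;> omega
  · exact le_rfl

namespace DehnSommerville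

/-- The entry of `M_{2n}` in row `i` and column label `2n+2-c`. -/
def entry (n c i : ℕ) : ℤ := ((2 * n + 1 - i).choose c : ℤ) - (i.choose c : ℤ)

def matrix (n : ℕ) (c : Fin (n + 1) → ℕ) : Matrix (Fin (n + 1)) (Fin (n + 1)) ℤ :=
  of fun i j ↦ entry n (c j) i

def weight (n s i : ℕ) : ℤ :=
  if i < s then 0 else (-1) ^ i * (2 * n + 1 - 2 * s).choose (i - s)

theorem weight_two_mul_add_one_sub {n s i : ℕ} (hs : s ≤ n) (hi : i ≤ 2 * n + 1) :
    weight n s (2 * n + 1 - i) = -weight n s i := by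
  have hsign : (-1 : ℤ) ^ (2 * n + 1 - i) = -(-1) ^ i := by
    rw [neg_one_pow_eq_pow_mod_two, neg_one_pow_eq_pow_mod_two (n := i)]
    rcases Nat.mod_two_eq_zero_or_one i with h | h
    · rw [show (2 * n + 1 - i) % 2 = 1 by omega, h]; simp
    · rw [show (2 * n + 1 - i) % 2 = 0 by omega, h]; simp
  unfold weight
  by_cases hlo : i < s
  · rw [if_pos hlo, if_neg (by omega), Nat.choose_eq_zero_of_lt (by omega)]; simp
  by_cases hhi : 2 * n + 1 - i < s
  · rw [if_pos hhi, if_neg hlo, Nat.choose_eq_zero_of_lt (by omega)]; simp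
  rw [if_neg hlo, if_neg hhi, hsign,
    Nat.choose_symm_of_eq_add (by omega : 2 * n + 1 - 2 * s = _ + (i - s))]
  ring

theorem sum_range_weight_mul_choose_eq_zero {n s c : ℕ} (h : c + 2 * s < 2 * n + 1) :
    ∑ j ∈ range (2 * n + 2), weight n s j * j.choose c = 0 := by
  set M := 2 * n + 1 - 2 * s
  have hlow : ∑ j ∈ range s, weight n s j * j.choose c = 0 :=
    sum_eq_zero fun j hj ↦ by simp [weight, mem_range.mp hj]
  have hhigh : ∑ j ∈ range s, weight n s (s + (M + 1 + j)) * (s + (M + 1 + j)).choose c = 0 :=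
    sum_eq_zero fun j _ ↦ by
      simp [weight, M, Nat.choose_eq_zero_of_lt (show M < M + 1 + j by omega)]
  have hmid : ∑ u ∈ range (M + 1), weight n s (s + u) * (s + u).choose c =
      (-1) ^ s * ∑ u ∈ range (M + 1), (-1 : ℤ) ^ u * M.choose u * (s + u).choose c := by
    rw [mul_sum]
    refine sum_congr rfl fun u _ ↦ ?_
    simp only [weight, if_neg (Nat.not_lt.mpr (Nat.le_add_right s u)), Nat.add_sub_cancel_left,
      pow_add]
    ring
  rw [show 2 * n + 2 = s + ((M + 1) + s) by omega, sum_range_add, sum_range_add, hlow, hhigh,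
    hmid, alternating_sum_choose_mul_choose_add_eq_zero (by omega)]
  simp

theorem sum_range_weight_mul_entry_eq_zero {n s c : ℕ} (h : c + 2 * s < 2 * n + 1) :
    ∑ i ∈ range (n + 1), weight n s i * entry n c i = 0 := by
  have hreflect : ∑ j ∈ range (n + 1), weight n s (n + 1 + j) * (n + 1 + j).choose c =
      -∑ i ∈ range (n + 1), weight n s i * (2 * n + 1 - i).choose c := by
    rw [← sum_range_reflect, ← sum_neg_distrib]
    refine sum_congr rfl fun i hi ↦ ?_
    rw [mem_range] at hi
    rw [show n + 1 + (n + 1 - 1 - i) = 2 * n + 1 - i by omega,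
      weight_two_mul_add_one_sub (by omega) (by omega), neg_mul]
  have hsum := sum_range_weight_mul_choose_eq_zero h
  rw [show 2 * n + 2 = (n + 1) + (n + 1) by omega, sum_range_add, hreflect] at hsum
  simp only [entry, mul_sub, sum_sub_distrib]
  linarith

theorem det_matrix_eq_zero {n : ℕ} {c : Fin (n + 1) → ℕ} (hc : Antitone c) {k : Fin (n + 1)}
    (hk : c k + 2 * k < 2 * n + 1) : (matrix n c).det = 0 := by
  refine det_eq_zero_of_mul_eq_zero_on_last_cols k.isLt (matrix n c)
    (of fun (s : Fin (k + 1)) (i : Fin (n + 1)) ↦ weight n s i) ?_ ?_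
  · rw [det_of_isUpperTriangular]
    · exact prod_ne_zero_iff.mpr fun s _ ↦ by simp [weight]
    · intro s i (hi : i < s)
      simp [weight, hi]
  · intro s j hj
    have hcj : c j ≤ c k := hc (Fin.le_def.mpr hj)
    have hsum := sum_range_weight_mul_entry_eq_zero (n := n) (s := s) (c := c j) (by omega)
    rw [← Fin.sum_univ_eq_sum_range] at hsum
    simpa [mul_apply, matrix] using hsum

theorem entry_eq_zero_of_lt {n c i : ℕ} (hc : 2 * n + 1 < c) (hi : i < c) :
    entry n c i = 0 := by
  simp [entry, Nat.choose_eq_zero_of_lt hi,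
    Nat.choose_eq_zero_of_lt (show 2 * n + 1 - i < c by omega)]

theorem entry_two_mul_add_one {n i : ℕ} (hi : i ≤ 2 * n) :
    entry n (2 * n + 1) i = if i = 0 then 1 else 0 := by
  rcases Nat.eq_zero_or_pos i with rfl | hpos
  · simp [entry]
  · simp [entry, hpos.ne', Nat.choose_eq_zero_of_lt (show 2 * n + 1 - i < 2 * n + 1 by omega),
      Nat.choose_eq_zero_of_lt (show i < 2 * n + 1 by omega)]

theorem entry_succ_succ {n e i : ℕ} (hi : i ≤ 2 * n + 1) :
    entry (n + 1) (e + 1) (i + 1) = entry n (e + 1) i + entry n e i := by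
  simp only [entry, show 2 * (n + 1) + 1 - (i + 1) = 2 * n + 1 - i + 1 by omega,
    Nat.choose_succ_succ', Nat.cast_add]
  ring

theorem det_matrix_succ {n : ℕ} {c : Fin (n + 2) → ℕ} (hc0 : c 0 = 2 * (n + 1) + 1)
    (hc : ∀ j : Fin (n + 1), 1 ≤ c j.succ) :
    (matrix (n + 1) c).det = ∑ t : Finset (Fin (n + 1)),
      (matrix n (t.piecewise (fun j ↦ c j.succ) fun j ↦ c j.succ - 1)).det := by
  have hcol (i : Fin (n + 2)) : matrix (n + 1) c i 0 = if (i : ℕ) = 0 then 1 else 0 := by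
    rw [matrix, of_apply, hc0, entry_two_mul_add_one (by omega)]
  have hminor : (matrix (n + 1) c).submatrix Fin.succ Fin.succ =
      of fun (i j : Fin (n + 1)) ↦ entry n (c j.succ) i + entry n (c j.succ - 1) i := by
    ext i j
    obtain ⟨e, he⟩ : ∃ e, c j.succ = e + 1 := ⟨c j.succ - 1, by have := hc j; omega⟩
    rw [submatrix_apply, matrix, of_apply, of_apply, he, Fin.val_succ,
      entry_succ_succ (by omega), Nat.add_sub_cancel]
  rw [det_eq_det_submatrix_succ_of_col_zero _ (by simp [hcol]) (fun i ↦ by simp [hcol]), hminor,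
    det_of_add_cols_eq_sum_piecewise (fun (j i : Fin (n + 1)) ↦ entry n (c j.succ) i)]
  refine sum_congr rfl fun t _ ↦ congrArg det (ext fun i j ↦ ?_)
  by_cases hj : j ∈ t <;> simp [matrix, hj]

theorem det_matrix_nonneg {n : ℕ}
    (hpos : ∀ c : Fin (n + 1) → ℕ, StrictAnti c → c 0 ≤ 2 * n + 1 →
      (∀ j : Fin (n + 1), 2 * n + 1 ≤ c j + 2 * j) → 0 < (matrix n c).det)
    {c : Fin (n + 1) → ℕ} (hc : Antitone c) : 0 ≤ (matrix n c).det := by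
  by_cases hinj : Function.Injective c
  swap
  · obtain ⟨a, b, hab, hne⟩ : ∃ a b, c a = c b ∧ a ≠ b := by
      simpa [Function.Injective] using hinj
    exact (det_zero_of_column_eq hne fun i ↦ by simp [matrix, hab]).ge
  by_cases hbad : ∃ k : Fin (n + 1), c k + 2 * k < 2 * n + 1
  · obtain ⟨k, hk⟩ := hbad
    exact (det_matrix_eq_zero hc hk).ge
  by_cases htop : 2 * n + 1 < c 0
  · refine (det_eq_zero_of_column_eq_zero 0 fun (i : Fin (n + 1)) ↦ ?_).ge
    exact entry_eq_zero_of_lt htop (by omega)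
  push Not at hbad htop
  exact (hpos c (hc.strictAnti_of_injective hinj) htop hbad).le

theorem det_matrix_pos {n : ℕ} {c : Fin (n + 1) → ℕ} (hc : StrictAnti c)
    (h0 : c 0 ≤ 2 * n + 1) (hle : ∀ j : Fin (n + 1), 2 * n + 1 ≤ c j + 2 * j) : 0 < (matrix n c).det := by
  induction n with
  | zero =>
    have hc0 : c 0 = 1 := by have := hle 0; rw [Fin.val_zero] at this; omega
    simp [matrix, hc0, entry]
  | succ n ih =>
    have hc0 : c 0 = 2 * (n + 1) + 1 := by have := hle 0; rw [Fin.val_zero] at this; omega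
    set d : Fin (n + 1) → ℕ := fun j ↦ c j.succ
    have hdanti : StrictAnti d := fun a b hab ↦ hc (Fin.succ_lt_succ_iff.mpr hab)
    have hd0 : d 0 < c 0 := hc (Fin.succ_pos 0)
    have hdle (j : Fin (n + 1)) : 2 * n + 1 ≤ d j + 2 * j := by
      have := hle j.succ
      rw [Fin.val_succ] at this
      change _ ≤ c j.succ + _
      omega
    rw [det_matrix_succ hc0 fun j ↦ show 1 ≤ d j by have := hdle j; omega]
    set t := univ.filter fun j ↦ d j + 2 * j = 2 * n + 1
    have ht (j : Fin (n + 1)) : t.piecewise d (fun j ↦ d j - 1) j =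
        if d j + 2 * j = 2 * n + 1 then d j else d j - 1 := by
      simp [t, piecewise]
    refine sum_pos' (fun t _ ↦ det_matrix_nonneg (fun _ ↦ ih)
      (hdanti.antitone_piecewise_sub_one t)) ⟨t, mem_univ _, ih ?_ ?_ ?_⟩
    · refine Fin.strictAnti_iff_succ_lt.mpr fun j ↦ ?_
      have hlt := hdanti (Fin.castSucc_lt_succ (i := j))
      have h1 := hdle j.castSucc
      have h2 := hdle j.succ
      rw [ht, ht]
      simp only [Fin.val_castSucc, Fin.val_succ] at h1 h2 ⊢
      split_ifs <;> omega
    · rw [ht]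
      split_ifs <;> omega
    · intro j
      have := hdle j
      rw [ht]
      split_ifs <;> omega

end DehnSommerville

open DehnSommerville in
/-- `b` is enumerated from `0`: `b k` is the paper's `b_{k+1}`, and `b_k ≤ 2k-1` reads
`b k ≤ 2k+1`. -/
theorem dehnSommerville_even_basis_iff_general (n : ℕ)
    (b : Fin (n + 1) → ℕ) (hmono : StrictMono b)
    (hlb : ∀ k, 1 ≤ b k) :
    (Matrix.det (fun i k : Fin (n + 1) =>
        ((Nat.choose (2 * n + 1 - (i : ℕ)) (2 * n + 2 - b k) : ℤ)
          - (Nat.choose (i : ℕ) (2 * n + 2 - b k) : ℤ))) ≠ 0)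
      ↔ ∀ k : Fin (n + 1), b k ≤ 2 * (k : ℕ) + 1 := by
  change (matrix n fun k ↦ 2 * n + 2 - b k).det ≠ 0 ↔ _
  constructor
  · intro hdet k
    by_contra! hk
    have hc : Antitone fun k ↦ 2 * n + 2 - b k :=
      fun _ _ hjk ↦ Nat.sub_le_sub_left (hmono.monotone hjk) _
    exact hdet (det_matrix_eq_zero hc (k := k) (by have := k.isLt; omega))
  · intro hb
    have hc : StrictAnti fun k ↦ 2 * n + 2 - b k := fun j k hjk ↦ by
      have := hmono hjk
      have := hb k
      have := k.isLt
      dsimp only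
      omega
    exact (det_matrix_pos hc (by have := hlb 0; omega) fun j ↦ by have := hb j; omega).ne'

/-- **Lemma (Dehn–Sommerville bases, even case).**
Let `n ≥ 1` and let `B = {b_1 < ⋯ < b_{n+1}} ⊆ {1,…,2n+1}` (here `b` is the strictly
increasing enumeration, 0-indexed, so `b k` is `b_{k+1}`).  The `(n+1)×(n+1)` matrix with
entry `C(2n+1-i, 2n+2-b_k) - C(i, 2n+2-b_k)` in row `i` and column `k` has nonzero
determinant iff `b_k ≤ 2k-1` for all `1 ≤ k ≤ n+1` (0-indexed: `b k ≤ 2k+1`). -/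
theorem dehnSommerville_even_basis_iff (n : ℕ) (hn : 1 ≤ n)
    (b : Fin (n + 1) → ℕ) (hmono : StrictMono b)
    (hlb : ∀ k, 1 ≤ b k) (hub : ∀ k, b k ≤ 2 * n + 1) :
    (Matrix.det (fun i k : Fin (n + 1) =>
        ((Nat.choose (2 * n + 1 - (i : ℕ)) (2 * n + 2 - b k) : ℤ)
          - (Nat.choose (i : ℕ) (2 * n + 2 - b k) : ℤ))) ≠ 0)
      ↔ ∀ k : Fin (n + 1), b k ≤ 2 * (k : ℕ) + 1 :=
  dehnSommerville_even_basis_iff_general n b hmono hlb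
end

section
/- Let n ≥ 1 and let B be an (n+1)-element subset of {1, 2, ..., 2n+1}. Then the (n+1)×(n+1) integer matrix formed by the columns of M_{2n} labeled by B (entry in row i, 0 ≤ i ≤ n, and column labeled b ∈ B equal to C(2n+1-i, 2n+2-b) - C(i, 2n+2-b)) has nonzero determinant if and only if there exists a Dyck word of length 2n+2 whose upstep set is exactly B. -/
/-!
Write `y = 1 + X`. Row `i` of `M_{2n}` lists the coefficients of `y^(2n+1-i) - y^i` at the
exponents `2n+2-b`. Since `S m = y^(2m+1) - 1` satisfies `S (m+2) = (X² + 2y) S (m+1) - y² S m`,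
the row polynomial `y^i S (n-i)` is `X^(2(n-i)+1) y^i` modulo the span of the `X^(2k+1) y^(n-k)`
with `k < n - i`. Hence the minor is the determinant of the coefficients of `X^(2k+1) y^(n-k)` at
the exponents `e_0 < ⋯ < e_n`, `e_j = 2n+2-b_(n-j)`. This determinant vanishes as soon as some
`e_j ≤ 2j` (a zero block), and is positive otherwise: either `e_n` is the top degree and the last
row is a unit vector, or Pascal's rule `y q = q + X q` splits every row and the determinant is a
sum of determinants of the same kind, all nonnegative and one of them positive. Finally
`e_j ≥ 2j+1` for all `j` says `b_k ≤ 2k+1` for all `k`, the ballot condition that characterises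
upstep sets of Dyck words.
-/

open DyckStep

def DyckWord.upstepSet (w : DyckWord) : Finset ℕ :=
  (Finset.Icc 1 w.toList.length).filter fun p => w.toList.getD (p - 1) D = U

/-- The determinant of the `(n+1)×(n+1)` submatrix of the Dehn–Sommerville matrix `M_{2n}`
on the columns labeled by `B` (entry in row `i` and column labeled `b`:
`C(2n+1-i, 2n+2-b) - C(i, 2n+2-b)`), where the columns of `B` are taken in
increasing order. -/
def dsDetEven (n : ℕ) (B : Finset ℕ) (h : B.card = n + 1) : ℤ :=
  Matrix.det fun i k : Fin (n + 1) =>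
    (Nat.choose (2 * n + 1 - (i : ℕ)) (2 * n + 2 - (B.orderIsoOfFin h k : ℕ)) : ℤ)
      - (Nat.choose (i : ℕ) (2 * n + 2 - (B.orderIsoOfFin h k : ℕ)) : ℤ)

namespace Matrix

open Finset

variable {ι R : Type*} [Fintype ι] [DecidableEq ι] [CommRing R]

theorem det_eq_zero_of_card_lt (M : Matrix ι ι R) (I J : Finset ι) (hIJ : #J < #I)
    (h : ∀ i ∈ I, ∀ j ∉ J, M i j = 0) : M.det = 0 := by
  rw [det_apply]
  refine sum_eq_zero fun σ _ => ?_
  have hcard : #J < #(I.image σ.symm) := by rwa [card_image_of_injective _ σ.symm.injective]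
  obtain ⟨j, hj, hjJ⟩ := exists_mem_notMem_of_card_lt_card hcard
  obtain ⟨i, hi, rfl⟩ := mem_image.mp hj
  refine smul_eq_zero_of_right _ (prod_eq_zero (mem_univ (σ.symm i)) ?_)
  rw [Equiv.apply_symm_apply]
  exact h i hi _ hjJ

theorem det_eq_of_sub_mem_span_Iio [LinearOrder ι] (A N : Matrix ι ι R)
    (h : ∀ i, A i - N i ∈ Submodule.span R (N '' Set.Iio i)) : A.det = N.det := by
  have hc : ∀ i, ∃ c : ι → R, ∑ k ∈ univ.filter (· < i), c k • N k = A i - N i := fun i =>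
    (Submodule.mem_span_image_finset_iff_exists_fun' R).mp (by simpa [Set.Iio] using h i)
  choose c hc using hc
  set L : Matrix ι ι R := 1 + of fun i k => if k < i then c i k else 0
  have hAL : A = L * N := by
    ext i j
    have := congrFun (hc i) j
    simp only [Finset.sum_apply, Pi.smul_apply, smul_eq_mul, Pi.sub_apply] at this
    simp [L, add_mul, Matrix.mul_apply, Matrix.one_apply, ite_mul, Finset.sum_add_distrib,
      Finset.sum_ite, this]
  have hL : L.det = 1 := by
    rw [det_of_isLowerTriangular L fun i k hik => ?_]
    · simp [L]
    · have hik : i < k := hik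
      simp [L, hik.ne, not_lt.mpr hik.le]
  rw [hAL, det_mul, hL, one_mul]

end Matrix

namespace List

theorem count_U_add_count_D (l : List DyckStep) : l.count U + l.count D = l.length := by
  induction l with
  | nil => rfl
  | cons s l ih =>
    cases s <;> simp only [List.count_cons_self, List.count_cons_of_ne, ne_eq, reduceCtorEq,
      not_false_eq_true, List.length_cons] <;> omega

theorem count_U_take (l : List DyckStep) (i : ℕ) :
    (l.take i).count U = Nat.count (fun p => l.getD p D = U) i := by
  induction i with
  | zero => simp
  | succ i ih =>
    rw [take_add_one, count_append, Nat.count_succ, ih, getD_eq_getElem?_getD]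
    rcases l[i]? with _ | _ | _ <;> simp

end List

namespace DyckWord

theorem zero_notMem_upstepSet (w : DyckWord) : 0 ∉ w.upstepSet := by
  simp [upstepSet]

theorem succ_mem_upstepSet (w : DyckWord) (p : ℕ) :
    p + 1 ∈ w.upstepSet ↔ w.toList.getD p D = U := by
  simp only [upstepSet, Finset.mem_filter, Finset.mem_Icc, Nat.add_sub_cancel]
  refine ⟨And.right, fun h => ⟨⟨by omega, ?_⟩, h⟩⟩
  by_contra! hp
  rw [List.getD_eq_default _ _ (by omega)] at h
  cases h

theorem le_two_mul_count_upstepSet (w : DyckWord) {i : ℕ} (hi : i ≤ w.toList.length) :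
    i ≤ 2 * Nat.count (· + 1 ∈ w.upstepSet) i := by
  have hU := w.toList.count_U_take i
  have hUD := (w.toList.take i).count_U_add_count_D
  have hDU := w.count_D_le_count_U i
  simp only [← succ_mem_upstepSet, List.length_take, min_eq_left hi] at hU hUD
  omega

end DyckWord

namespace DehnSommerville

open Polynomial

noncomputable def oddPoly (m k : ℕ) : ℤ[X] := X ^ (2 * k + 1) * (1 + X) ^ (m - k)

theorem coeff_oddPoly_add (m k d : ℕ) :
    (oddPoly m k).coeff (d + (2 * k + 1)) = (m - k).choose d := by
  rw [oddPoly, coeff_X_pow_mul, coeff_one_add_X_pow]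

theorem coeff_oddPoly_of_lt {m k e : ℕ} (h : e < 2 * k + 1) : (oddPoly m k).coeff e = 0 := by
  rw [oddPoly, coeff_X_pow_mul', if_neg (by omega)]

theorem coeff_oddPoly_of_gt {m k e : ℕ} (hk : k ≤ m) (h : m + k + 1 < e) :
    (oddPoly m k).coeff e = 0 := by
  obtain ⟨d, rfl⟩ : ∃ d, e = d + (2 * k + 1) := ⟨e - (2 * k + 1), by omega⟩
  rw [coeff_oddPoly_add, Nat.choose_eq_zero_of_lt (by omega), Nat.cast_zero]

theorem coeff_oddPoly_top {m k : ℕ} (hk : k ≤ m) : (oddPoly m k).coeff (m + k + 1) = 1 := by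
  rw [show m + k + 1 = (m - k) + (2 * k + 1) by omega, coeff_oddPoly_add, Nat.choose_self,
    Nat.cast_one]

theorem one_add_X_mul_oddPoly {m k : ℕ} (hk : k ≤ m) :
    (1 + X) * oddPoly m k = oddPoly (m + 1) k := by
  rw [oddPoly, oddPoly, show m + 1 - k = m - k + 1 by omega, pow_succ]
  ring

theorem X_sq_mul_oddPoly (m k : ℕ) : X ^ 2 * oddPoly m k = oddPoly (m + 1) (k + 1) := by
  rw [oddPoly, oddPoly, Nat.add_sub_add_right]
  ring

theorem coeff_X_mul_oddPoly (m k e : ℕ) :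
    (X * oddPoly m k).coeff e = (oddPoly m k).coeff (e - 1) := by
  rcases e with _ | e
  · rw [coeff_X_mul_zero, Nat.zero_sub, coeff_oddPoly_of_lt (by omega)]
  · rw [coeff_X_mul, Nat.add_sub_cancel]

noncomputable def oddSpan (m j : ℕ) : Submodule ℤ ℤ[X] :=
  Submodule.span ℤ (oddPoly m '' Set.Iio j)

theorem oddPoly_mem_oddSpan {m k j : ℕ} (h : k < j) : oddPoly m k ∈ oddSpan m j :=
  Submodule.subset_span ⟨k, h, rfl⟩

theorem oddSpan_mono (m : ℕ) {j j' : ℕ} (h : j ≤ j') : oddSpan m j ≤ oddSpan m j' :=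
  Submodule.span_mono (Set.image_mono (Set.Iio_subset_Iio h))

theorem mul_mem_oddSpan {q p : ℤ[X]} {m j m' j' : ℕ}
    (hq : ∀ k < j, q * oddPoly m k ∈ oddSpan m' j') (hp : p ∈ oddSpan m j) :
    q * p ∈ oddSpan m' j' := by
  have : oddSpan m j ≤ (oddSpan m' j').comap (LinearMap.mulLeft ℤ q) :=
    Submodule.span_le.mpr (by rintro _ ⟨k, hk, rfl⟩; exact hq k hk)
  exact this hp

theorem one_add_X_pow_mul_mem_oddSpan {p : ℤ[X]} {m j : ℕ} (hj : j ≤ m + 1)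
    (hp : p ∈ oddSpan m j) (i : ℕ) : (1 + X) ^ i * p ∈ oddSpan (m + i) j := by
  induction i with
  | zero => simpa using hp
  | succ i ih =>
    rw [pow_succ', mul_assoc, ← add_assoc]
    refine mul_mem_oddSpan (fun k hk => ?_) ih
    rw [one_add_X_mul_oddPoly (by omega)]
    exact oddPoly_mem_oddSpan hk

theorem X_sq_mul_mem_oddSpan {p : ℤ[X]} {m j : ℕ} (hp : p ∈ oddSpan m j) :
    X ^ 2 * p ∈ oddSpan (m + 1) (j + 1) :=
  mul_mem_oddSpan (fun k hk => X_sq_mul_oddPoly m k ▸ oddPoly_mem_oddSpan (by omega)) hp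

theorem one_add_X_pow_sub_one_sub_oddPoly_mem (m : ℕ) :
    (1 + X) ^ (2 * m + 1) - 1 - oddPoly m m ∈ oddSpan m m := by
  induction m using Nat.strong_induction_on with
  | _ m ih =>
  match m with
  | 0 => simp [oddPoly]
  | 1 =>
    have : (1 + X) ^ (2 * 1 + 1) - 1 - oddPoly 1 1 = (3 : ℤ) • oddPoly 1 0 := by
      simp only [oddPoly]
      ring
    rw [this]
    exact Submodule.smul_mem _ _ (oddPoly_mem_oddSpan one_pos)
  | m + 2 =>
    set d₁ := (1 + X) ^ (2 * (m + 1) + 1) - 1 - oddPoly (m + 1) (m + 1)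
    set d₀ := (1 + X) ^ (2 * m + 1) - 1 - oddPoly m m
    have key : (1 + X) ^ (2 * (m + 2) + 1) - 1 - oddPoly (m + 2) (m + 2)
        = X ^ 2 * d₁ + (2 : ℤ) • ((1 + X) ^ 1 * d₁) + (2 : ℤ) • oddPoly (m + 2) (m + 1)
          - (1 + X) ^ 2 * d₀ - oddPoly (m + 2) m := by
      simp only [d₁, d₀, oddPoly, Nat.sub_self,
        show m + 2 - m = 2 by omega, show m + 2 - (m + 1) = 1 by omega]
      ring
    have h₁ := ih (m + 1) (by omega)
    have h₀ := ih m (by omega)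
    rw [key]
    refine Submodule.sub_mem _ (Submodule.sub_mem _ (Submodule.add_mem _ (Submodule.add_mem _
      (X_sq_mul_mem_oddSpan h₁) (Submodule.smul_mem _ _ ?_)) (Submodule.smul_mem _ _
      (oddPoly_mem_oddSpan (by omega)))) ?_) (oddPoly_mem_oddSpan (by omega))
    · exact oddSpan_mono _ (by omega) (one_add_X_pow_mul_mem_oddSpan (by omega) h₁ 1)
    · exact oddSpan_mono _ (by omega) (one_add_X_pow_mul_mem_oddSpan (by omega) h₀ 2)

noncomputable def dsPoly (n i : ℕ) : ℤ[X] := (1 + X) ^ (2 * n + 1 - i) - (1 + X) ^ i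

theorem coeff_dsPoly (n i e : ℕ) :
    (dsPoly n i).coeff e = ((2 * n + 1 - i).choose e : ℤ) - (i.choose e : ℤ) := by
  rw [dsPoly, coeff_sub, coeff_one_add_X_pow, coeff_one_add_X_pow]

theorem dsPoly_sub_oddPoly_mem {n i : ℕ} (hi : i ≤ n) :
    dsPoly n i - oddPoly n (n - i) ∈ oddSpan n (n - i) := by
  have h := one_add_X_pow_mul_mem_oddSpan (by omega)
    (one_add_X_pow_sub_one_sub_oddPoly_mem (n - i)) i
  rw [Nat.sub_add_cancel hi] at h
  convert h using 1
  simp only [dsPoly, oddPoly, Nat.sub_self, show n - (n - i) = i by omega]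
  rw [show 2 * n + 1 - i = 2 * (n - i) + 1 + i by omega]
  ring

noncomputable def oddCoeffMatrix (m : ℕ) {r : ℕ} (e : Fin r → ℕ) : Matrix (Fin r) (Fin r) ℤ :=
  Matrix.of fun i k => (oddPoly m k).coeff (e i)

variable {m r : ℕ}

theorem det_oddCoeffMatrix_eq_zero_of_le {e : Fin r → ℕ} (he : Monotone e) (j : Fin r)
    (hj : e j ≤ 2 * j) : (oddCoeffMatrix m e).det = 0 := by
  refine Matrix.det_eq_zero_of_card_lt _ (Finset.Iic j) (Finset.Iio j) ?_ fun i hi k hk => ?_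
  · simp
  · simp only [Finset.mem_Iic, Finset.mem_Iio, not_lt] at hi hk
    have := he hi
    exact coeff_oddPoly_of_lt (by omega)

theorem det_oddCoeffMatrix_eq_zero_of_ge {e : Fin r → ℕ} (he : Monotone e) (hr : r ≤ m + 1)
    (j : Fin r) (hj : m + j + 2 ≤ e j) : (oddCoeffMatrix m e).det = 0 := by
  refine Matrix.det_eq_zero_of_card_lt _ (Finset.Ici j) (Finset.Ioi j) ?_ fun i hi k hk => ?_
  · simp only [Fin.card_Ici, Fin.card_Ioi]
    omega
  · simp only [Finset.mem_Ici, Finset.mem_Ioi, not_lt] at hi hk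
    have := he hi
    exact coeff_oddPoly_of_gt (by omega) (by omega)

theorem det_oddCoeffMatrix_nonneg {e : Fin r → ℕ} (he : Monotone e) (hr : r ≤ m + 1)
    (hpos : ∀ s : Fin r → ℕ, StrictMono s → (∀ j : Fin r, 2 * (j : ℕ) + 1 ≤ s j) →
      (∀ j : Fin r, s j ≤ m + j + 1) → 0 < (oddCoeffMatrix m s).det) :
    0 ≤ (oddCoeffMatrix m e).det := by
  by_cases hinj : Function.Injective e
  · by_cases hlo : ∀ j : Fin r, 2 * (j : ℕ) + 1 ≤ e j
    · by_cases hhi : ∀ j : Fin r, e j ≤ m + j + 1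
      · exact (hpos e (he.strictMono_of_injective hinj) hlo hhi).le
      · push Not at hhi
        obtain ⟨j, hj⟩ := hhi
        rw [det_oddCoeffMatrix_eq_zero_of_ge he hr j hj]
    · push Not at hlo
      obtain ⟨j, hj⟩ := hlo
      rw [det_oddCoeffMatrix_eq_zero_of_le he j (by omega)]
  · obtain ⟨a, b, hab, hne⟩ : ∃ a b, e a = e b ∧ a ≠ b := by
      simpa [Function.Injective] using hinj
    rw [Matrix.det_zero_of_row_eq hne (funext fun k => by simp [oddCoeffMatrix, hab])]

theorem det_oddCoeffMatrix_succ (hr : r ≤ m + 1) (e : Fin r → ℕ) :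
    (oddCoeffMatrix (m + 1) e).det
      = ∑ ε : Fin r → Bool, (oddCoeffMatrix m fun i => e i - (ε i).toNat).det := by
  have hrow : oddCoeffMatrix (m + 1) e
      = fun i => ∑ b : Bool, fun k : Fin r => (oddPoly m k).coeff (e i - b.toNat) := by
    ext i k
    simp only [oddCoeffMatrix, Matrix.of_apply, Finset.sum_apply, Fintype.sum_bool,
      Bool.toNat_true, Bool.toNat_false, Nat.sub_zero]
    rw [← one_add_X_mul_oddPoly (by omega), add_mul, one_mul, coeff_add, coeff_X_mul_oddPoly,
      add_comm]
  rw [hrow]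
  exact (Matrix.detRowAlternating (R := ℤ) (n := Fin r)).toMultilinearMap.map_sum _

theorem det_oddCoeffMatrix_of_last {e : Fin (r + 1) → ℕ} (hr : r ≤ m)
    (hlast : e (Fin.last r) = m + r + 1) :
    (oddCoeffMatrix m e).det = (oddCoeffMatrix m (e ∘ Fin.castSucc)).det := by
  rw [Matrix.det_succ_row _ (Fin.last r), Finset.sum_eq_single (Fin.last r)]
  · simp [oddCoeffMatrix, hlast, coeff_oddPoly_top hr, Matrix.submatrix]
  · intro k _ hk
    have hk' : (k : ℕ) < r := Fin.val_lt_last hk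
    simp [oddCoeffMatrix, hlast, coeff_oddPoly_of_gt (show (k : ℕ) ≤ m by omega)
      (show m + k + 1 < m + r + 1 by omega)]
  · simp

theorem monotone_sub_toNat {e : Fin r → ℕ} (he : StrictMono e) (ε : Fin r → Bool) :
    Monotone fun j => e j - (ε j).toNat := by
  intro a b hab
  rcases hab.lt_or_eq with hab | rfl
  · have := he hab
    have := Bool.toNat_le (ε a)
    have := Bool.toNat_le (ε b)
    show e a - _ ≤ e b - _
    omega
  · rfl

theorem exists_shift_strictMono {e : Fin r → ℕ} (he : StrictMono e)
    (hlo : ∀ j : Fin r, 2 * (j : ℕ) + 1 ≤ e j) (hhi : ∀ j : Fin r, e j ≤ m + j + 2)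
    (hr : r ≤ m + 1) :
    ∃ ε : Fin r → Bool, StrictMono (fun j => e j - (ε j).toNat) ∧
      (∀ j : Fin r, 2 * (j : ℕ) + 1 ≤ e j - (ε j).toNat) ∧
      ∀ j : Fin r, e j - (ε j).toNat ≤ m + j + 1 := by
  refine ⟨fun j => decide (e j = m + j + 2), ?_⟩
  dsimp only
  have hε : ∀ j : Fin r, (e j = m + j + 2 ∧ e j - (decide (e j = m + j + 2)).toNat = m + j + 1)
      ∨ (e j ≤ m + j + 1 ∧ e j - (decide (e j = m + j + 2)).toNat = e j) := fun j => by
    have := hhi j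
    by_cases h : e j = m + j + 2
    · simp [h]
    · simp only [h, decide_false, Bool.toNat_false, Nat.sub_zero, and_true, false_and, false_or]
      omega
  refine ⟨fun a b hab => ?_, fun j => ?_, fun j => ?_⟩
  · have := he hab
    have : (a : ℕ) < b := hab
    show e a - _ < e b - _
    rcases hε a with ⟨_, _⟩ | ⟨_, _⟩ <;> rcases hε b with ⟨_, _⟩ | ⟨_, _⟩ <;> omega
  · have := hlo j
    have := j.isLt
    rcases hε j with ⟨_, _⟩ | ⟨_, _⟩ <;> omega
  · rcases hε j with ⟨_, _⟩ | ⟨_, _⟩ <;> omega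

theorem det_oddCoeffMatrix_pos {m r : ℕ} {e : Fin r → ℕ} (he : StrictMono e)
    (hlo : ∀ j : Fin r, 2 * (j : ℕ) + 1 ≤ e j) (hhi : ∀ j : Fin r, e j ≤ m + j + 1) :
    0 < (oddCoeffMatrix m e).det := by
  match r, e, he, hlo, hhi with
  | 0, e, _, _, _ => simp
  | r + 1, e, he, hlo, hhi =>
    have hlo_last := hlo (Fin.last r)
    have hhi_last := hhi (Fin.last r)
    rw [Fin.val_last] at hlo_last hhi_last
    by_cases hlast : e (Fin.last r) = m + r + 1
    · rw [det_oddCoeffMatrix_of_last (by omega) hlast]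
      exact det_oddCoeffMatrix_pos (he.comp Fin.strictMono_castSucc) (fun j => hlo j.castSucc)
        (fun j => hhi j.castSucc)
    · obtain ⟨m, rfl⟩ : ∃ m', m = m' + 1 := ⟨m - 1, by omega⟩
      obtain ⟨ε, hs, hslo, hshi⟩ :=
        exists_shift_strictMono (m := m) he hlo (fun j => by have := hhi j; omega) (by omega)
      rw [det_oddCoeffMatrix_succ (by omega)]
      exact Finset.sum_pos'
        (fun ε' _ => det_oddCoeffMatrix_nonneg (monotone_sub_toNat he ε') (by omega)
          fun s hs hslo hshi => det_oddCoeffMatrix_pos hs hslo hshi)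
        ⟨ε, Finset.mem_univ _, det_oddCoeffMatrix_pos hs hslo hshi⟩
termination_by m + r

theorem det_oddCoeffMatrix_ne_zero_iff {e : Fin r → ℕ} (he : StrictMono e)
    (hhi : ∀ j : Fin r, e j ≤ m + j + 1) :
    (oddCoeffMatrix m e).det ≠ 0 ↔ ∀ j : Fin r, 2 * (j : ℕ) + 1 ≤ e j := by
  refine ⟨fun hdet j => ?_, fun hlo => (det_oddCoeffMatrix_pos he hlo hhi).ne'⟩
  by_contra! h
  exact hdet (det_oddCoeffMatrix_eq_zero_of_le he.monotone j (by omega))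

theorem dsDetEven_eq_det_oddCoeffMatrix (n : ℕ) (B : Finset ℕ) (hB : B.card = n + 1) :
    dsDetEven n B hB
      = (oddCoeffMatrix n fun j => 2 * n + 2 - B.orderEmbOfFin hB (Fin.rev j)).det := by
  set e : Fin (n + 1) → ℕ := fun j => 2 * n + 2 - B.orderEmbOfFin hB (Fin.rev j)
  have hds : dsDetEven n B hB = (Matrix.of fun i j : Fin (n + 1) =>
      (dsPoly n i).coeff (2 * n + 2 - B.orderEmbOfFin hB j)).det := by
    simp only [dsDetEven, coeff_dsPoly, Finset.coe_orderIsoOfFin_apply]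
    rfl
  rw [hds, ← Matrix.det_submatrix_equiv_self Fin.revPerm,
    ← Matrix.det_transpose (oddCoeffMatrix n e)]
  refine Matrix.det_eq_of_sub_mem_span_Iio _ _ fun i => ?_
  let ev : ℤ[X] →ₗ[ℤ] Fin (n + 1) → ℤ := LinearMap.pi fun j => lcoeff ℤ (e j)
  have hmem := Submodule.mem_map_of_mem (f := ev)
    (dsPoly_sub_oddPoly_mem (n := n) (i := Fin.rev i) (by omega))
  rw [oddSpan, Submodule.map_span, Fin.val_rev, show n - (n + 1 - (i + 1)) = i by omega] at hmem
  refine Submodule.span_mono ?_ hmem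
  rintro _ ⟨_, ⟨k, hk, rfl⟩, rfl⟩
  exact ⟨⟨k, hk.trans i.isLt⟩, hk, rfl⟩

theorem orderEmbOfFin_lt_iff_lt_count {r : ℕ} (B : Finset ℕ) (hB : B.card = r) (k : Fin r)
    (x : ℕ) : B.orderEmbOfFin hB k < x ↔ (k : ℕ) < Nat.count (· ∈ B) x := by
  have hf : (Set.ofPred (· ∈ B)).Finite := B.finite_toSet
  have hcard : hf.toFinset.card = r := by simpa using hB
  have hnth : B.orderEmbOfFin hB k = Nat.nth (· ∈ B) k := by
    refine (congrFun (Finset.orderEmbOfFin_unique hB (f := fun j : Fin r => Nat.nth (· ∈ B) j)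
      (fun j => Nat.nth_mem_of_lt_card hf (hcard ▸ j.isLt))
      (fun a b hab => Nat.nth_lt_nth_of_lt_card hf hab (hcard ▸ b.isLt))) k).symm
  rw [hnth]
  refine ⟨fun h => ?_, Nat.nth_lt_of_lt_count⟩
  have := Nat.count_strict_mono (Nat.nth_mem_of_lt_card hf (hcard ▸ k.isLt)) h
  rwa [Nat.count_nth_of_lt_card_finite hf (hcard ▸ k.isLt)] at this

theorem forall_orderEmbOfFin_le_iff {r : ℕ} {B : Finset ℕ} (hB : B.card = r) (h0 : 0 ∉ B) :
    (∀ k : Fin r, B.orderEmbOfFin hB k ≤ 2 * k + 1)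
      ↔ ∀ k < r, k < Nat.count (· + 1 ∈ B) (2 * k + 1) := by
  simp only [Fin.forall_iff, ← Nat.lt_succ_iff, orderEmbOfFin_lt_iff_lt_count,
    Nat.count_succ' (· ∈ B), if_neg h0, add_zero]

theorem forall_lt_iff_ballot {c : ℕ → ℕ} (hc : Monotone c) (n : ℕ) :
    (∀ k < n + 1, k < c (2 * k + 1)) ↔ ∀ i ≤ 2 * n + 2, i ≤ 2 * c i := by
  refine ⟨fun h i hi => ?_, fun h k hk => by have := h (2 * k + 1) (by omega); omega⟩
  rcases i with _ | i
  · omega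
  · have := h (i / 2) (by omega)
    have := hc (show 2 * (i / 2) + 1 ≤ i + 1 by omega)
    omega

theorem dsDetEven_ne_zero_iff {n : ℕ} {B : Finset ℕ} (hB : B.card = n + 1)
    (hsub : B ⊆ Finset.Icc 1 (2 * n + 1)) :
    dsDetEven n B hB ≠ 0 ↔ ∀ k : Fin (n + 1), B.orderEmbOfFin hB k ≤ 2 * k + 1 := by
  have hb : ∀ k, 1 ≤ B.orderEmbOfFin hB k ∧ B.orderEmbOfFin hB k ≤ 2 * n + 1 := fun k =>
    Finset.mem_Icc.mp (hsub (B.orderEmbOfFin_mem hB k))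
  have hkb : ∀ k : Fin (n + 1), (k : ℕ) < B.orderEmbOfFin hB k := fun k => by
    have h := (orderEmbOfFin_lt_iff_lt_count B hB k _).mp (Nat.lt_succ_self _)
    rw [Nat.count_succ', if_neg fun h0 => by simpa using hsub h0, add_zero] at h
    exact h.trans_le (Nat.count_le _)
  rw [dsDetEven_eq_det_oddCoeffMatrix, det_oddCoeffMatrix_ne_zero_iff]
  · rw [← Fin.revPerm.forall_congr_right]
    refine forall_congr' fun k => ?_
    have := hb k
    simp only [Fin.revPerm_apply, Fin.rev_rev, Fin.val_rev]
    omega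
  · intro a a' h
    have := (B.orderEmbOfFin hB).strictMono (Fin.rev_lt_rev.mpr h)
    have := hb a.rev
    show 2 * n + 2 - _ < 2 * n + 2 - _
    omega
  · intro j
    have := hkb j.rev
    have := Fin.val_rev j
    omega

theorem count_succ_mem_eq_card {B : Finset ℕ} {N : ℕ} (hsub : B ⊆ Finset.Icc 1 N) :
    Nat.count (· + 1 ∈ B) N = B.card := by
  have h := Nat.count_succ' (· ∈ B) N
  rw [Nat.count_eq_card_filter_range, Finset.filter_mem_eq_inter,
    Finset.inter_eq_right.mpr fun x hx =>
      Finset.mem_range.mpr (by have := Finset.mem_Icc.mp (hsub hx); omega),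
    if_neg fun h0 => by simpa using hsub h0] at h
  omega

def wordOfFinset (B : Finset ℕ) (N : ℕ) : List DyckStep :=
  (List.range N).map fun p => if p + 1 ∈ B then U else D

theorem getD_wordOfFinset_eq_U {B : Finset ℕ} {N : ℕ} (hBN : ∀ p ∈ B, p ≤ N) (p : ℕ) :
    (wordOfFinset B N).getD p D = U ↔ p + 1 ∈ B := by
  rw [wordOfFinset, List.getD_eq_getElem?_getD, List.getElem?_map]
  by_cases hp : p < N
  · rw [List.getElem?_range hp]
    by_cases h : p + 1 ∈ B <;> simp [h]
  · rw [List.getElem?_eq_none (by simpa using hp)]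
    simp only [Option.map_none, Option.getD_none, reduceCtorEq, false_iff]
    exact fun h => hp (by have := hBN _ h; omega)

theorem exists_dyckWord_of_ballot {n : ℕ} {B : Finset ℕ} (hB : B.card = n + 1)
    (hsub : B ⊆ Finset.Icc 1 (2 * n + 1))
    (hballot : ∀ i ≤ 2 * n + 2, i ≤ 2 * Nat.count (· + 1 ∈ B) i) :
    ∃ w : DyckWord, w.toList.length = 2 * n + 2 ∧ w.upstepSet = B := by
  set l := wordOfFinset B (2 * n + 2)
  have hl := getD_wordOfFinset_eq_U (N := 2 * n + 2)
    (fun p hp => by have := Finset.mem_Icc.mp (hsub hp); omega)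
  have hlen : l.length = 2 * n + 2 := by simp [l, wordOfFinset]
  have hU : ∀ i, (l.take i).count U = Nat.count (· + 1 ∈ B) i := fun i => by
    simp only [List.count_U_take, l, hl]
  have hprefix : ∀ i ≤ 2 * n + 2, (l.take i).count D ≤ (l.take i).count U := fun i hi => by
    have := (l.take i).count_U_add_count_D
    have := hballot i hi
    rw [hU, List.length_take, hlen] at *
    omega
  have hUl : l.count U = n + 1 := by
    rw [← hB, ← count_succ_mem_eq_card (N := 2 * n + 2)
      (hsub.trans (Finset.Icc_subset_Icc_right (by omega))),
      ← hU, List.take_of_length_le hlen.le]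
  have hDl : l.count D = n + 1 := by have := l.count_U_add_count_D; omega
  refine ⟨⟨l, hUl.trans hDl.symm, fun i => ?_⟩, hlen, ?_⟩
  · rcases le_total i (2 * n + 2) with hi | hi
    · exact hprefix i hi
    · rw [List.take_of_length_le (by omega)]
      omega
  · ext (_ | p)
    · have h0 : 0 ∉ B := fun h => by simpa using hsub h
      simp [DyckWord.zero_notMem_upstepSet, h0]
    · exact (DyckWord.succ_mem_upstepSet _ p).trans (hl p)

end DehnSommerville

theorem dsEven_basis_iff_dyck_general (n : ℕ) (B : Finset ℕ)
    (hB : B.card = n + 1) (hsub : B ⊆ Finset.Icc 1 (2 * n + 1)) :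
    dsDetEven n B hB ≠ 0
      ↔ ∃ w : DyckWord, w.toList.length = 2 * n + 2 ∧ w.upstepSet = B := by
  have h0 : 0 ∉ B := fun h => by simpa using hsub h
  rw [DehnSommerville.dsDetEven_ne_zero_iff hB hsub,
    DehnSommerville.forall_orderEmbOfFin_le_iff hB h0,
    DehnSommerville.forall_lt_iff_ballot (Nat.count_monotone _)]
  refine ⟨DehnSommerville.exists_dyckWord_of_ballot hB hsub, ?_⟩
  rintro ⟨w, hlen, rfl⟩ i hi
  exact w.le_two_mul_count_upstepSet (hlen ▸ hi)

/-- **Theorem.** Let `n ≥ 1` and let `B` be an `(n+1)`-element subset of `{1,…,2n+1}`.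
The submatrix of `M_{2n}` on the columns labeled by `B` has nonzero determinant iff
there is a Dyck word of length `2n+2` whose upstep set is exactly `B`. -/
theorem dsEven_basis_iff_dyck (n : ℕ) (hn : 1 ≤ n) (B : Finset ℕ)
    (hB : B.card = n + 1) (hsub : B ⊆ Finset.Icc 1 (2 * n + 1)) :
    dsDetEven n B hB ≠ 0
      ↔ ∃ w : DyckWord, w.toList.length = 2 * n + 2 ∧ w.upstepSet = B :=
  dsEven_basis_iff_dyck_general n B hB hsub
end

section
/- Let n ≥ 1 and let B be an (n+1)-element subset of {1, 2, ..., 2n+1}. Then the (n+1)×(n+1) submatrix of M_{2n} on the columns labeled by B has nonzero determinant if and only if 1 ∈ B and the n×n submatrix of M_{2n-1} on the columns labeled by {b-1 : b ∈ B, b ≠ 1} has nonzero determinant. Consequently, B ↦ {b-1 : b ∈ B, b ≠ 1} is a bijection from the set of (n+1)-subsets of {1,...,2n+1} giving invertible submatrices of M_{2n} onto the set of n-subsets of {1,...,2n} giving invertible submatrices of M_{2n-1}. -/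
/-- The determinant of the `n×n` submatrix of the Dehn–Sommerville matrix `M_{2n-1}`
on the columns labeled by `B` (entry in row `i` and column labeled `b`:
`C(2n-i, 2n+1-b) - C(i, 2n+1-b)`), columns taken in increasing order. -/
def dsDetOdd (n : ℕ) (B : Finset ℕ) (h : B.card = n) : ℤ :=
  Matrix.det fun i k : Fin n =>
    (Nat.choose (2 * n - (i : ℕ)) (2 * n + 1 - (B.orderIsoOfFin h k : ℕ)) : ℤ)
      - (Nat.choose (i : ℕ) (2 * n + 1 - (B.orderIsoOfFin h k : ℕ)) : ℤ)

/-!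
Write the entry of `M_{N-1}` in row `i` and column `N + 1 - m` as
`r_N(i, m) = C(N - i, m) - C(i, m)`. For `N = 2n + 1` the row vector `((-1)^i C(2n+1, i))_i`
kills every column except the one labelled `1` (fold `∑_i (-1)^i C(N, i) C(N - i, m) = [m = N]`
in half), so an invertible submatrix of `M_{2n}` must use column `1`, which is the first unit
vector. Expanding along it leaves rows `1, …, n`, and the identity
`(N + 1 - m) r_{N+1}(j + 1, m) = (j + 1) r_N(j, m) + (N - j) r_N(j + 1, m)`
(with `r_{2n}(n, m) = 0`) says that this minor, with column `b` scaled by `b - 1`, is an invertible upper bidiagonal matrix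
times the submatrix of `M_{2n-1}` on the columns `b - 1`. The bijection is then
`B ↦ {b - 1 : b ∈ B, b ≠ 1}` with inverse `B' ↦ insert 1 (B' + 1)`.
-/

open Finset Polynomial

theorem Int.succ_sub_mul_choose_succ (a m : ℕ) :
    ((a : ℤ) + 1 - m) * (a + 1).choose m = (a + 1) * a.choose m := by
  rcases le_or_gt m (a + 1) with h | h
  · have := Nat.choose_mul_succ_eq a m
    rw [← Nat.cast_inj (R := ℤ)] at this
    push_cast [Nat.cast_sub h] at this
    linarith
  · simp [Nat.choose_eq_zero_of_lt h, Nat.choose_eq_zero_of_lt (Nat.lt_of_succ_lt h)]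

theorem sum_neg_one_pow_mul_choose_mul_choose_sub (N m : ℕ) :
    ∑ i ∈ range (N + 1), (-1 : ℤ) ^ i * N.choose i * (N - i).choose m =
      if m = N then 1 else 0 := by
  have h := congrArg (coeff · m) (add_pow (-1 : ℤ[X]) (X + 1) N)
  rw [show (-1 + (X + 1) : ℤ[X]) = X by ring] at h
  simp only [coeff_X_pow, finsetSum_coeff] at h
  rw [h]
  refine sum_congr rfl fun i _ => ?_
  rw [show (-1 : ℤ[X]) ^ i * (X + 1) ^ (N - i) * (N.choose i : ℤ[X]) =
      C ((-1 : ℤ) ^ i * N.choose i) * (X + 1) ^ (N - i) by simp; ring,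
    coeff_C_mul, coeff_X_add_one_pow]

theorem neg_one_pow_sub_of_odd {N i : ℕ} (hN : Odd N) (hi : i ≤ N) :
    (-1 : ℤ) ^ (N - i) = -(-1) ^ i := by
  obtain ⟨j, rfl⟩ := Nat.exists_eq_add_of_le hi
  have hodd : (-1 : ℤ) ^ i * (-1) ^ j = -1 := by rw [← pow_add, hN.neg_one_pow]
  have hsq : (-1 : ℤ) ^ i * (-1) ^ i = 1 := by rw [← mul_pow]; simp
  rw [Nat.add_sub_cancel_left]
  linear_combination (-1 : ℤ) ^ i * hodd - (-1 : ℤ) ^ j * hsq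

/-- `dsEntry N i m` is the entry of `M_{N-1}` in row `i` and the column labelled `N + 1 - m`. -/
def dsEntry (N i m : ℕ) : ℤ := ((N - i).choose m : ℤ) - (i.choose m : ℤ)

theorem dsEntry_self (N i : ℕ) (hi : i < N) : dsEntry N i N = if i = 0 then 1 else 0 := by
  rcases i with _ | i
  · simp [dsEntry, Nat.choose_eq_zero_of_lt hi]
  · have : N - (i + 1) < N := by omega
    simp [dsEntry, Nat.choose_eq_zero_of_lt hi, Nat.choose_eq_zero_of_lt this]

theorem dsEntry_two_mul_self (n m : ℕ) : dsEntry (2 * n) n m = 0 := by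
  simp [dsEntry, two_mul]

theorem dsEntry_succ_mul (N j m : ℕ) (hj : j < N) :
    ((N : ℤ) + 1 - m) * dsEntry (N + 1) (j + 1) m =
      (j + 1) * dsEntry N j m + ((N : ℤ) - j) * dsEntry N (j + 1) m := by
  obtain ⟨a, rfl⟩ := Nat.exists_eq_add_of_lt hj
  simp only [dsEntry, show j + a + 1 + 1 - (j + 1) = a + 1 by omega,
    show j + a + 1 - j = a + 1 by omega, show j + a + 1 - (j + 1) = a by omega]
  push_cast
  linear_combination Int.succ_sub_mul_choose_succ a m - Int.succ_sub_mul_choose_succ j m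

-- The terms `i` and `2n + 1 - i` of `sum_neg_one_pow_mul_choose_mul_choose_sub` pair up.
theorem sum_neg_one_pow_mul_choose_mul_dsEntry (n m : ℕ) :
    ∑ i ∈ range (n + 1), (-1 : ℤ) ^ i * (2 * n + 1).choose i * dsEntry (2 * n + 1) i m =
      if m = 2 * n + 1 then 1 else 0 := by
  set f : ℕ → ℤ := fun i => (-1 : ℤ) ^ i * (2 * n + 1).choose i * (2 * n + 1 - i).choose m
  calc _ = ∑ i ∈ range (n + 1), (f i + f (2 * n + 1 - i)) := by
        refine sum_congr rfl fun i hi => ?_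
        have hi : i ≤ 2 * n + 1 := by rw [mem_range] at hi; omega
        simp only [f, dsEntry, Nat.sub_sub_self hi, Nat.choose_symm hi,
          neg_one_pow_sub_of_odd (odd_two_mul_add_one n) hi]
        ring
    _ = ∑ i ∈ range (2 * n + 1 + 1), f i := by
        rw [show 2 * n + 1 + 1 = (n + 1) + (n + 1) by ring, sum_add_distrib,
          sum_range_add f (n + 1) (n + 1), ← sum_range_reflect (fun k => f (n + 1 + k)) (n + 1)]
        congr 1
        refine sum_congr rfl fun i hi => ?_
        rw [mem_range] at hi
        congr 1
        omega
    _ = _ := sum_neg_one_pow_mul_choose_mul_choose_sub _ _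

theorem det_dsEntry_eq_zero (n : ℕ) (m : Fin (n + 1) → ℕ) (hm : ∀ k, m k ≠ 2 * n + 1) :
    (Matrix.of fun i k : Fin (n + 1) => dsEntry (2 * n + 1) i (m k)).det = 0 := by
  refine Matrix.exists_vecMul_eq_zero_iff.mp
    ⟨fun i => (-1) ^ (i : ℕ) * (2 * n + 1).choose i, fun h => by simpa using congrFun h 0, ?_⟩
  ext k
  simp only [Matrix.vecMul, dotProduct, Matrix.of_apply, Pi.zero_apply]
  rw [Fin.sum_univ_eq_sum_range (fun i => (-1) ^ i * ((2 * n + 1).choose i : ℤ) *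
    dsEntry (2 * n + 1) i (m k)), sum_neg_one_pow_mul_choose_mul_dsEntry, if_neg (hm k)]

theorem det_dsEntry_of_head_eq (n : ℕ) (m : Fin (n + 1) → ℕ) (h0 : m 0 = 2 * n + 1) :
    (Matrix.of fun i k : Fin (n + 1) => dsEntry (2 * n + 1) i (m k)).det =
      (Matrix.of fun j k : Fin n => dsEntry (2 * n + 1) (j + 1) (m k.succ)).det := by
  rw [Matrix.det_succ_column_zero, Fin.sum_univ_succ, sum_eq_zero fun i _ => ?_]
  · simp [h0, dsEntry_self, Matrix.submatrix]
  · simp [h0, dsEntry_self _ _ (by omega : (i : ℕ) + 1 < 2 * n + 1)]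

def dsTransition (n : ℕ) : Matrix (Fin n) (Fin n) ℤ :=
  Matrix.diagonal (fun j : Fin n => (j : ℤ) + 1) +
    Matrix.of fun j t : Fin n => if (t : ℕ) = j + 1 then (2 * n : ℤ) - j else 0

theorem det_dsTransition_ne_zero (n : ℕ) : (dsTransition n).det ≠ 0 := by
  have htri : (dsTransition n).BlockTriangular id := fun i j (hij : j < i) => by
    simp only [dsTransition, Matrix.add_apply, Matrix.diagonal_apply_ne _ hij.ne', Matrix.of_apply,
      zero_add, ite_eq_right_iff]
    omega
  rw [Matrix.det_of_isUpperTriangular htri, prod_ne_zero_iff]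
  intro i _
  simp only [dsTransition, Matrix.add_apply, Matrix.diagonal_apply_eq, Matrix.of_apply,
    Nat.left_eq_add, one_ne_zero, ↓reduceIte, add_zero]
  omega

theorem dsEntry_mul_eq_dsTransition_mul (n : ℕ) (m : Fin n → ℕ) :
    (Matrix.of fun j k : Fin n => ((2 * n : ℤ) + 1 - m k) * dsEntry (2 * n + 1) (j + 1) (m k)) =
      dsTransition n * Matrix.of fun j k : Fin n => dsEntry (2 * n) j (m k) := by
  ext j k
  rw [dsTransition, Matrix.add_mul, Matrix.add_apply, Matrix.diagonal_mul, Matrix.mul_apply]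
  simp only [Matrix.of_apply]
  rw [Fin.sum_univ_eq_sum_range
      (fun t => (if t = j + 1 then (2 * n : ℤ) - j else 0) * dsEntry (2 * n) t (m k)) n]
  simp only [ite_mul, zero_mul, sum_ite_eq', mem_range]
  have key := dsEntry_succ_mul (2 * n) j (m k) (by omega)
  push_cast at key
  rw [key]
  split_ifs with h
  · rfl
  · rw [show (j : ℕ) + 1 = n by omega, dsEntry_two_mul_self]
    simp

theorem det_dsEntry_succ_ne_zero_iff (n : ℕ) (m : Fin n → ℕ) (hm : ∀ k, m k ≠ 2 * n + 1) :
    (Matrix.of fun j k : Fin n => dsEntry (2 * n + 1) (j + 1) (m k)).det ≠ 0 ↔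
      (Matrix.of fun j k : Fin n => dsEntry (2 * n) j (m k)).det ≠ 0 := by
  have h := (Matrix.det_mul_row (fun k => (2 * n : ℤ) + 1 - m k)
    (Matrix.of fun j k : Fin n => dsEntry (2 * n + 1) (j + 1) (m k))).symm.trans
    (congrArg Matrix.det (dsEntry_mul_eq_dsTransition_mul n m))
  rw [Matrix.det_mul] at h
  have hprod : ∏ k, ((2 * n : ℤ) + 1 - m k) ≠ 0 :=
    prod_ne_zero_iff.mpr fun k _ => by have := hm k; omega
  rw [← mul_ne_zero_iff_left hprod, h, mul_ne_zero_iff_left (det_dsTransition_ne_zero n)]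

def shiftDown (B : Finset ℕ) : Finset ℕ := (B.erase 1).image (· - 1)

def shiftUp (B : Finset ℕ) : Finset ℕ := insert 1 (B.image (· + 1))

theorem zero_notMem_of_subset_Icc {B : Finset ℕ} {N : ℕ} (h : B ⊆ Icc 1 N) : 0 ∉ B :=
  fun h0 => by simpa using h h0

theorem card_shiftDown (B : Finset ℕ) : (shiftDown B).card = (B.erase 1).card :=
  card_image_of_injOn fun x hx y hy (hxy : x - 1 = y - 1) => by
    have := ne_of_mem_erase hx; have := ne_of_mem_erase hy; omega

theorem card_shiftUp {B : Finset ℕ} (h0 : 0 ∉ B) : (shiftUp B).card = B.card + 1 := by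
  rw [shiftUp, card_insert_of_notMem, card_image_of_injective _ (add_left_injective 1)]
  simpa using h0

theorem shiftDown_subset_Icc {B : Finset ℕ} {N : ℕ} (h : B ⊆ Icc 1 (N + 1)) :
    shiftDown B ⊆ Icc 1 N := by
  intro x hx
  obtain ⟨b, hb, rfl⟩ := mem_image.mp hx
  have := mem_Icc.mp (h (mem_of_mem_erase hb))
  have := ne_of_mem_erase hb
  rw [mem_Icc]
  omega

theorem shiftUp_subset_Icc {B : Finset ℕ} {N : ℕ} (h : B ⊆ Icc 1 N) :
    shiftUp B ⊆ Icc 1 (N + 1) := by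
  intro x hx
  rw [shiftUp, mem_insert, mem_image] at hx
  rw [mem_Icc]
  rcases hx with rfl | ⟨b, hb, rfl⟩
  · omega
  · have := mem_Icc.mp (h hb)
    omega

theorem shiftDown_shiftUp {B : Finset ℕ} (h0 : 0 ∉ B) : shiftDown (shiftUp B) = B := by
  rw [shiftDown, shiftUp, erase_insert (by simpa using h0), image_image]
  exact (image_congr fun x _ => by simp).trans image_id

theorem shiftUp_shiftDown {B : Finset ℕ} (h0 : 0 ∉ B) (h1 : 1 ∈ B) :
    shiftUp (shiftDown B) = B := by
  rw [shiftDown, shiftUp, image_image]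
  conv_rhs => rw [← insert_erase h1]
  congr 1
  refine (image_congr fun x hx => ?_).trans image_id
  have := ne_of_mem_erase hx
  have : x ≠ 0 := fun h => h0 (h ▸ mem_of_mem_erase hx)
  simp only [Function.comp_apply, id]
  omega

theorem orderEmbOfFin_zero_eq_one {B : Finset ℕ} {n : ℕ} (hB : B.card = n + 1) (h0 : 0 ∉ B)
    (h1 : 1 ∈ B) : B.orderEmbOfFin hB 0 = 1 := by
  rw [show (0 : Fin (n + 1)) = ⟨0, n.succ_pos⟩ from rfl, orderEmbOfFin_zero]
  refine le_antisymm (min'_le B 1 h1) (Nat.one_le_iff_ne_zero.mpr fun h => h0 ?_)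
  exact h ▸ min'_mem _ _

theorem orderEmbOfFin_shiftDown {B : Finset ℕ} {n : ℕ} (hB : B.card = n + 1) (h0 : 0 ∉ B)
    (h1 : 1 ∈ B) (h : (shiftDown B).card = n) (k : Fin n) :
    (shiftDown B).orderEmbOfFin h k = B.orderEmbOfFin hB k.succ - 1 := by
  have hgt (k : Fin n) : 1 < B.orderEmbOfFin hB k.succ := by
    simpa [orderEmbOfFin_zero_eq_one hB h0 h1] using (B.orderEmbOfFin hB).strictMono k.succ_pos
  refine congrFun (orderEmbOfFin_unique h (f := fun k => B.orderEmbOfFin hB k.succ - 1)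
    (fun k => ?_) fun k l hkl => ?_).symm k
  · exact mem_image_of_mem _ (mem_erase.mpr ⟨(hgt k).ne', orderEmbOfFin_mem _ _ _⟩)
  · have := (B.orderEmbOfFin hB).strictMono (Fin.succ_lt_succ_iff.mpr hkl)
    have := hgt k
    dsimp only
    omega

theorem dsDetEven_ne_zero_iff (n : ℕ) (B : Finset ℕ) (hB : B.card = n + 1)
    (hsub : B ⊆ Icc 1 (2 * n + 1)) :
    dsDetEven n B hB ≠ 0 ↔
      1 ∈ B ∧ ∃ h : (shiftDown B).card = n, dsDetOdd n (shiftDown B) h ≠ 0 := by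
  set b := B.orderEmbOfFin hB
  have hb (k) : b k ∈ Icc 1 (2 * n + 1) := hsub (orderEmbOfFin_mem B hB k)
  have h0 := zero_notMem_of_subset_Icc hsub
  have hEven : dsDetEven n B hB =
      (Matrix.of fun i k : Fin (n + 1) => dsEntry (2 * n + 1) i (2 * n + 2 - b k)).det := rfl
  by_cases h1 : 1 ∈ B
  · have hcard : (shiftDown B).card = n := by
      rw [card_shiftDown, card_erase_of_mem h1, hB, Nat.add_sub_cancel]
    have hgt (k : Fin n) : 1 < b k.succ := by
      simpa [b, orderEmbOfFin_zero_eq_one hB h0 h1] using b.strictMono k.succ_pos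
    have hOdd : dsDetOdd n (shiftDown B) hcard =
        (Matrix.of fun j k : Fin n => dsEntry (2 * n) j (2 * n + 2 - b k.succ)).det := by
      simp only [dsDetOdd, coe_orderIsoOfFin_apply, orderEmbOfFin_shiftDown hB h0 h1]
      congr 1
      ext j k
      rw [show 2 * n + 1 - (b k.succ - 1) = 2 * n + 2 - b k.succ by have := hgt k; omega]
      rfl
    rw [hEven, det_dsEntry_of_head_eq n _ (by simp [b, orderEmbOfFin_zero_eq_one hB h0 h1]),
      det_dsEntry_succ_ne_zero_iff n _ (fun k => by have := hgt k; omega), ← hOdd]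
    exact ⟨fun h => ⟨h1, hcard, h⟩, fun ⟨_, _, h⟩ => h⟩
  · refine iff_of_false (not_not.mpr ?_) (fun h => h1 h.1)
    rw [hEven]
    refine det_dsEntry_eq_zero n _ fun k => ?_
    have := mem_Icc.mp (hb k)
    have : b k ≠ 1 := fun h => h1 (h ▸ orderEmbOfFin_mem B hB k)
    omega

theorem dsEven_iff_dsOdd_and_bijOn_general (n : ℕ) :
    (∀ (B : Finset ℕ) (hB : B.card = n + 1), B ⊆ Finset.Icc 1 (2 * n + 1) →
      (dsDetEven n B hB ≠ 0 ↔
        1 ∈ B ∧ ∃ h' : ((B.erase 1).image (· - 1)).card = n,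
          dsDetOdd n ((B.erase 1).image (· - 1)) h' ≠ 0))
    ∧ Set.BijOn (fun B : Finset ℕ => (B.erase 1).image (· - 1))
        {B : Finset ℕ | B ⊆ Finset.Icc 1 (2 * n + 1) ∧
          ∃ hB : B.card = n + 1, dsDetEven n B hB ≠ 0}
        {B' : Finset ℕ | B' ⊆ Finset.Icc 1 (2 * n) ∧
          ∃ hB' : B'.card = n, dsDetOdd n B' hB' ≠ 0} := by
  refine ⟨dsDetEven_ne_zero_iff n, Set.InvOn.bijOn (f' := shiftUp) ⟨?_, ?_⟩ ?_ ?_⟩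
  · rintro B ⟨hsub, hB, hdet⟩
    exact shiftUp_shiftDown (zero_notMem_of_subset_Icc hsub)
      ((dsDetEven_ne_zero_iff n B hB hsub).1 hdet).1
  · rintro B' ⟨hsub', -⟩
    exact shiftDown_shiftUp (zero_notMem_of_subset_Icc hsub')
  · rintro B ⟨hsub, hB, hdet⟩
    exact ⟨shiftDown_subset_Icc hsub, ((dsDetEven_ne_zero_iff n B hB hsub).1 hdet).2⟩
  · rintro B' ⟨hsub', hB', hdet⟩
    have h0 := zero_notMem_of_subset_Icc hsub'
    have hcard : (shiftUp B').card = n + 1 := by rw [card_shiftUp h0, hB']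
    refine ⟨shiftUp_subset_Icc hsub', hcard, (dsDetEven_ne_zero_iff n _ hcard
      (shiftUp_subset_Icc hsub')).2 ⟨mem_insert_self _ _, ?_⟩⟩
    rw [shiftDown_shiftUp h0]
    exact ⟨hB', hdet⟩

/-- **Lemma (even/odd Dehn–Sommerville bases correspond).**
For `n ≥ 1` and an `(n+1)`-subset `B ⊆ {1,…,2n+1}`, the submatrix of `M_{2n}` on the
columns labeled by `B` is invertible iff `1 ∈ B` and the submatrix of `M_{2n-1}` on the
columns labeled by `{b-1 : b ∈ B, b ≠ 1}` is invertible.  Consequently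
`B ↦ {b-1 : b ∈ B, b ≠ 1}` is a bijection from the `(n+1)`-subsets of `{1,…,2n+1}` giving
invertible submatrices of `M_{2n}` onto the `n`-subsets of `{1,…,2n}` giving invertible
submatrices of `M_{2n-1}`. -/
theorem dsEven_iff_dsOdd_and_bijOn (n : ℕ) (hn : 1 ≤ n) :
    (∀ (B : Finset ℕ) (hB : B.card = n + 1), B ⊆ Finset.Icc 1 (2 * n + 1) →
      (dsDetEven n B hB ≠ 0 ↔
        1 ∈ B ∧ ∃ h' : ((B.erase 1).image (· - 1)).card = n,
          dsDetOdd n ((B.erase 1).image (· - 1)) h' ≠ 0))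
    ∧ Set.BijOn (fun B : Finset ℕ => (B.erase 1).image (· - 1))
        {B : Finset ℕ | B ⊆ Finset.Icc 1 (2 * n + 1) ∧
          ∃ hB : B.card = n + 1, dsDetEven n B hB ≠ 0}
        {B' : Finset ℕ | B' ⊆ Finset.Icc 1 (2 * n) ∧
          ∃ hB' : B'.card = n, dsDetOdd n B' hB' ≠ 0} :=
  dsEven_iff_dsOdd_and_bijOn_general n
end

section
/- For every n ≥ 1, the number of (n+1)-element subsets B of {1, 2, ..., 2n+1} for which the (n+1)×(n+1) submatrix of M_{2n} on the columns labeled by B has nonzero determinant equals the Catalan number C_{n+1} = (1/(n+2))·C(2n+2, n+1). -/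
/-!
Since `C(N, N - b)` is the coefficient of `X^b` in `X^(N-k) (1+X)^k`, row `i` of `M_{2n}` is the
coefficient vector, in degrees `1, …, 2n+1`, of
`X^(i+1) (1+X)^(2n+1-i) - X^(2n+2-i) (1+X)^i = X y^i ((1+X)^(2t+1) - X^(2t+1))`,
where `y = X (1+X)` and `t = n - i`. As `(1+X)^(2t+1) - X^(2t+1)` is a polynomial in `y` of degree
`t` with constant term `1`, a unitriangular row operation turns `M_{2n}` into the matrix whose row
`l` holds the coefficients of `X y^l = X^(l+1) (1+X)^l`, i.e. `C(l, b - l - 1)`.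

For columns `b_0 < ⋯ < b_n` the minor of this matrix vanishes as soon as some `b_k > 2k+1`, since
rows `0, …, k` are zero on columns `k, …, n`. Otherwise it is positive, by induction: expanding
along the row `X` and applying Pascal's rule `X y^(l+1) = (X + X²) X y^l` to the other columns
writes it, by multilinearity, as a sum of minors of the same kind, all nonnegative and one
positive. Finally, the sets with `b_k ≤ 2k+1` for all `k` are the sets of up-step positions of
the Dyck paths of semilength `n + 1`.
-/

open Polynomial Finset Matrix

namespace Matrix

theorem det_eq_zero_of_zero_block {ι R : Type*} [Fintype ι] [DecidableEq ι] [CommRing R]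
    (A : Matrix ι ι R) (s t : Finset ι) (hst : Fintype.card ι < #s + #t)
    (h : ∀ i ∈ s, ∀ j ∈ t, A i j = 0) : A.det = 0 := by
  refine (det_apply A).trans (Finset.sum_eq_zero fun σ _ => ?_)
  obtain ⟨x, hx⟩ : (t.map σ.toEmbedding ∩ s).Nonempty :=
    inter_nonempty_of_card_lt_card_add_card (subset_univ _) (subset_univ _)
      (by rwa [card_univ, card_map, add_comm])
  obtain ⟨hxσ, hxs⟩ := mem_inter.mp hx
  obtain ⟨j, hj, rfl⟩ := mem_map.mp hxσ
  exact smul_eq_zero_of_right _ (Finset.prod_eq_zero (mem_univ j) (h (σ j) hxs j hj))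

theorem det_eq_sum_det_piecewise_cols {ι R : Type*} [Fintype ι] [DecidableEq ι] [CommRing R]
    (u v : ι → ι → R) :
    (of fun i j => u i j + v i j).det =
      ∑ s : Finset ι, (of fun i j => if j ∈ s then u i j else v i j).det := by
  rw [← det_transpose]
  have h := (detRowAlternating : (ι → R) [⋀^ι]→ₗ[R] R).map_add_univ (fun j i => u i j)
    (fun j i => v i j)
  refine h.trans (sum_congr rfl fun s _ => ?_)
  rw [← det_transpose]
  congr 1
  ext j i
  by_cases hj : j ∈ s <;> simp [hj]

end Matrix

theorem Polynomial.coeff_X_pow_mul_one_add_X_pow {R : Type*} [Semiring R] {a k N b : ℕ}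
    (h : a + k = N) (hb : b ≤ N) : (X ^ a * (1 + X) ^ k : R[X]).coeff b = k.choose (N - b) := by
  rw [coeff_X_pow_mul', coeff_one_add_X_pow]
  split_ifs with hab
  · rw [Nat.choose_symm_of_eq_add (show k = (b - a) + (N - b) by omega)]
  · rw [Nat.choose_eq_zero_of_lt (by omega), Nat.cast_zero]

theorem Finset.orderEmbOfFin_le_iff_lt_card_filter {α : Type*} [LinearOrder α] {B : Finset α}
    {N : ℕ} (hB : #B = N) (k : Fin N) (x : α) :
    B.orderEmbOfFin hB k ≤ x ↔ (k : ℕ) < #(B.filter (· ≤ x)) := by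
  set b := B.orderEmbOfFin hB
  have hcard : #(B.filter (· ≤ x)) = #(univ.filter fun j => b j ≤ x) := by
    rw [← B.map_orderEmbOfFin_univ hB, filter_map, card_map]
    rfl
  rw [hcard]
  constructor
  · intro h
    calc (k : ℕ) < #(Iic k) := by simp
      _ ≤ _ := card_le_card fun j hj =>
        mem_filter.mpr ⟨mem_univ _, (b.monotone (mem_Iic.mp hj)).trans h⟩
  · intro h
    by_contra hk
    have hsub : univ.filter (fun j => b j ≤ x) ⊆ Iio k := fun j hj =>
      mem_Iio.mpr (b.lt_iff_lt.mp ((mem_filter.mp hj).2.trans_lt (not_le.mp hk)))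
    have := card_le_card hsub
    simp only [Fin.card_Iio] at this
    omega

namespace DehnSommerville

-- `a = 1 + X` and `b = X` satisfy `a - b = 1`, `a² + b² = 1 + 2ab` and
-- `a^(m+4) - b^(m+4) = (a² + b²) (a^(m+2) - b^(m+2)) - (ab)² (a^m - b^m)`.
noncomputable def oddPowDiff : ℕ → ℤ[X]
  | 0 => 1
  | 1 => 1 + 3 * X
  | t + 2 => (1 + 2 * X) * oddPowDiff (t + 1) - X ^ 2 * oddPowDiff t

theorem oddPowDiff_comp (t : ℕ) :
    (oddPowDiff t).comp (X * (1 + X)) = (1 + X) ^ (2 * t + 1) - X ^ (2 * t + 1) := by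
  induction t using oddPowDiff.induct with
  | case1 => simp [oddPowDiff]
  | case2 => simp [oddPowDiff]; ring
  | case3 t ih₁ ih₀ =>
    simp only [Nat.succ_eq_add_one]
    rw [oddPowDiff, sub_comp, mul_comp, mul_comp, ih₁, ih₀]
    simp only [add_comp, one_comp, mul_comp, ofNat_comp, X_comp, X_pow_comp]
    ring

theorem natDegree_oddPowDiff_le (t : ℕ) : (oddPowDiff t).natDegree ≤ t := by
  induction t using oddPowDiff.induct with
  | case1 => simp [oddPowDiff]
  | case2 => rw [oddPowDiff]; compute_degree!
  | case3 t ih₁ ih₀ =>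
    rw [oddPowDiff]
    have h : (1 + 2 * X : ℤ[X]).natDegree ≤ 1 := by compute_degree!
    exact (natDegree_sub_le_of_le (natDegree_mul_le_of_le h ih₁)
      (natDegree_mul_le_of_le (natDegree_X_pow_le 2) ih₀)).trans (by omega)

theorem coeff_zero_oddPowDiff (t : ℕ) : (oddPowDiff t).coeff 0 = 1 := by
  induction t using oddPowDiff.induct with
  | case1 => simp [oddPowDiff]
  | case2 => simp [oddPowDiff]
  | case3 t ih₁ _ => simp [oddPowDiff, ih₁]

noncomputable def basisPoly (l : ℕ) : ℤ[X] := X * (X * (1 + X)) ^ l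

noncomputable def rowPoly (n i : ℕ) : ℤ[X] :=
  X ^ (i + 1) * (1 + X) ^ (2 * n + 1 - i) - X ^ (2 * n + 2 - i) * (1 + X) ^ i

theorem coeff_rowPoly {n i b : ℕ} (hi : i ≤ 2 * n + 1) (hb : b ≤ 2 * n + 2) :
    (rowPoly n i).coeff b =
      ((2 * n + 1 - i).choose (2 * n + 2 - b) : ℤ) - (i.choose (2 * n + 2 - b) : ℤ) := by
  rw [rowPoly, coeff_sub, coeff_X_pow_mul_one_add_X_pow (by omega) hb,
    coeff_X_pow_mul_one_add_X_pow (by omega) hb]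

theorem rowPoly_eq_comp {n i : ℕ} (hi : i ≤ n) :
    rowPoly n i = X * (X ^ i * oddPowDiff (n - i)).comp (X * (1 + X)) := by
  obtain ⟨t, rfl⟩ := Nat.exists_eq_add_of_le hi
  rw [mul_comp, X_pow_comp, Nat.add_sub_cancel_left, oddPowDiff_comp, rowPoly,
    show 2 * (i + t) + 1 - i = i + (2 * t + 1) by omega,
    show 2 * (i + t) + 2 - i = i + 1 + (2 * t + 1) by omega, mul_pow]
  ring

noncomputable def transitionMatrix (n : ℕ) : Matrix (Fin (n + 1)) (Fin (n + 1)) ℤ :=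
  of fun i l => (X ^ (i : ℕ) * oddPowDiff (n - i)).coeff l

theorem det_transitionMatrix (n : ℕ) : (transitionMatrix n).det = 1 := by
  have hupper : (transitionMatrix n).IsUpperTriangular := fun i l hli => by
    rw [transitionMatrix, of_apply, coeff_X_pow_mul', if_neg (not_le.mpr hli : ¬ (i : ℕ) ≤ l)]
  rw [det_of_isUpperTriangular hupper]
  exact Finset.prod_eq_one fun i _ => by
    rw [transitionMatrix, of_apply, coeff_X_pow_mul', if_pos le_rfl, Nat.sub_self,
      coeff_zero_oddPowDiff]

theorem rowPoly_eq_sum {n : ℕ} (i : Fin (n + 1)) :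
    rowPoly n i = ∑ l : Fin (n + 1), transitionMatrix n i l • basisPoly l := by
  have hdeg : (X ^ (i : ℕ) * oddPowDiff (n - i) : ℤ[X]).natDegree < n + 1 :=
    (natDegree_mul_le_of_le (natDegree_X_pow_le _) (natDegree_oddPowDiff_le _)).trans_lt
      (by omega)
  rw [rowPoly_eq_comp (by omega), as_sum_range_C_mul_X_pow' _ hdeg,
    ← Fin.sum_univ_eq_sum_range, Polynomial.sum_comp, mul_sum]
  refine Finset.sum_congr rfl fun l _ => ?_
  simp only [mul_comp, C_comp, X_pow_comp, basisPoly, transitionMatrix, of_apply, smul_eq_C_mul]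
  ring

theorem coeff_basisPoly_zero (l : ℕ) : (basisPoly l).coeff 0 = 0 := by
  simp [basisPoly]

theorem coeff_basisPoly_of_lt {l b : ℕ} (hb : 2 * l + 1 < b) : (basisPoly l).coeff b = 0 := by
  have h : (1 + X : ℤ[X]).natDegree ≤ 1 := by compute_degree!
  refine coeff_eq_zero_of_natDegree_lt ?_
  calc (basisPoly l).natDegree = (X ^ (l + 1) * (1 + X) ^ l : ℤ[X]).natDegree := by
        rw [basisPoly, mul_pow, ← mul_assoc, ← pow_succ']
    _ ≤ (l + 1) + l * 1 :=
        natDegree_mul_le_of_le (natDegree_X_pow_le _) (natDegree_pow_le_of_le _ h)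
    _ < b := by omega

theorem coeff_basisPoly_succ (l b : ℕ) :
    (basisPoly (l + 1)).coeff (b + 2) = (basisPoly l).coeff (b + 1) + (basisPoly l).coeff b := by
  rw [show basisPoly (l + 1) = X * basisPoly l + X ^ 2 * basisPoly l by
    rw [basisPoly, basisPoly, pow_succ]; ring]
  rw [coeff_add, coeff_X_mul, coeff_X_pow_mul]

noncomputable def basisMinor {N : ℕ} (b : Fin N → ℕ) : Matrix (Fin N) (Fin N) ℤ :=
  of fun l k => (basisPoly l).coeff (b k)

theorem det_basisMinor_eq_zero_of_lt {N : ℕ} {b : Fin N → ℕ} (hb : Monotone b) {k : Fin N}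
    (hk : 2 * (k : ℕ) + 1 < b k) : (basisMinor b).det = 0 := by
  refine det_eq_zero_of_zero_block _ (Iic k) (Ici k) (by simp; omega) fun l hl j hj => ?_
  have hbj : b k ≤ b j := hb (mem_Ici.mp hj)
  have hlk : l ≤ k := mem_Iic.mp hl
  rw [Fin.le_def] at hlk
  exact coeff_basisPoly_of_lt (by omega)

theorem det_basisMinor_succ {N : ℕ} {b : Fin (N + 1) → ℕ} (hb : StrictMono b) (h0 : b 0 = 1) :
    (basisMinor b).det = ∑ s : Finset (Fin N),
      (basisMinor fun k => if k ∈ s then b k.succ - 1 else b k.succ - 2).det := by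
  have hrow : ∀ j, basisMinor b 0 j = if j = 0 then 1 else 0 := by
    intro j
    rcases eq_or_ne j 0 with rfl | hj
    · simp [basisMinor, basisPoly, h0]
    · have : b 0 < b j := hb (Fin.pos_iff_ne_zero.mpr hj)
      simp [basisMinor, basisPoly, coeff_X, hj]
      omega
  have hminor : (basisMinor b).submatrix Fin.succ Fin.succ = of fun l k : Fin N =>
      (basisPoly l).coeff (b k.succ - 1) + (basisPoly l).coeff (b k.succ - 2) := by
    ext l k
    obtain ⟨c, hc⟩ : ∃ c, b k.succ = c + 2 :=
      ⟨b k.succ - 2, by have := hb (Fin.succ_pos k); omega⟩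
    simp [basisMinor, hc, coeff_basisPoly_succ]
  rw [det_succ_row_zero, sum_eq_single 0 (fun j _ hj => by simp [hrow, hj]) (by simp),
    hrow, if_pos rfl, Fin.succAbove_zero, hminor, det_eq_sum_det_piecewise_cols]
  simp only [Fin.val_zero, pow_zero, mul_one, one_mul]
  refine sum_congr rfl fun s _ => congrArg det (ext fun l k => ?_)
  by_cases hk : k ∈ s <;> simp [basisMinor, hk]

theorem det_basisMinor_nonneg_of_forall_pos {N : ℕ}
    (hpos : ∀ b : Fin N → ℕ, StrictMono b → (∀ k, 0 < b k) →
      (∀ k, b k ≤ 2 * (k : ℕ) + 1) → 0 < (basisMinor b).det)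
    {e : Fin N → ℕ} (he : Monotone e) : 0 ≤ (basisMinor e).det := by
  by_cases hinj : Function.Injective e
  swap
  · obtain ⟨i, j, hij, hne⟩ := Function.not_injective_iff.mp hinj
    exact (det_zero_of_column_eq hne fun l => by simp [basisMinor, hij]).ge
  by_cases h0 : ∃ k, e k = 0
  · obtain ⟨k, hk⟩ := h0
    exact (det_eq_zero_of_column_eq_zero k fun l => by
      simp [basisMinor, hk, coeff_basisPoly_zero]).ge
  by_cases hbig : ∃ k : Fin N, 2 * (k : ℕ) + 1 < e k
  · obtain ⟨k, hk⟩ := hbig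
    exact (det_basisMinor_eq_zero_of_lt he hk).ge
  simp only [not_exists, not_lt] at h0 hbig
  exact (hpos e (he.strictMono_of_injective hinj) (fun k => Nat.pos_of_ne_zero (h0 k)) hbig).le

theorem det_basisMinor_pos {N : ℕ} {b : Fin N → ℕ} (hb : StrictMono b) (hpos : ∀ k, 0 < b k)
    (hle : ∀ k, b k ≤ 2 * (k : ℕ) + 1) : 0 < (basisMinor b).det := by
  induction N with
  | zero => simp
  | succ N ih =>
    have h0 : b 0 = 1 := le_antisymm (hle 0) (hpos 0)
    have two_le : ∀ k : Fin N, 2 ≤ b k.succ := fun k => by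
      have := hb (Fin.succ_pos k)
      omega
    have le_succ : ∀ k : Fin N, b k.succ ≤ 2 * (k : ℕ) + 3 := fun k => by
      have := hle k.succ
      rw [Fin.val_succ] at this
      omega
    rw [det_basisMinor_succ hb h0]
    -- the positive term has columns `min (b k.succ - 1) (2k + 1)`
    refine sum_pos' (fun s _ => det_basisMinor_nonneg_of_forall_pos (fun e he => ih he)
      fun i j hij => ?_)
      ⟨univ.filter fun k => b k.succ ≤ 2 * (k : ℕ) + 2, mem_univ _, ih ?_ ?_ ?_⟩
    · rcases hij.lt_or_eq with h | rfl
      · have := hb (Fin.succ_lt_succ_iff.mpr h)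
        have := two_le i
        split_ifs <;> omega
      · rfl
    all_goals simp only [mem_filter, mem_univ, true_and]
    · intro i j hij
      have := hb (Fin.succ_lt_succ_iff.mpr hij)
      have := le_succ i
      have := two_le i
      have : (i : ℕ) < j := hij
      dsimp only
      split_ifs <;> omega
    · intro k
      have := two_le k
      split_ifs <;> omega
    · intro k
      have := le_succ k
      split_ifs <;> omega

theorem det_basisMinor_ne_zero_iff {N : ℕ} {b : Fin N → ℕ} (hb : StrictMono b)
    (hpos : ∀ k, 0 < b k) : (basisMinor b).det ≠ 0 ↔ ∀ k, b k ≤ 2 * (k : ℕ) + 1 :=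
  ⟨fun h k => not_lt.mp fun hk => h (det_basisMinor_eq_zero_of_lt (k := k) hb.monotone hk),
    fun h => (det_basisMinor_pos hb hpos h).ne'⟩

theorem dsDetEven_eq_det_basisMinor {n : ℕ} {B : Finset ℕ} (hB : #B = n + 1)
    (hle : ∀ b ∈ B, b ≤ 2 * n + 2) :
    dsDetEven n B hB = (basisMinor fun k => (B.orderEmbOfFin hB k : ℕ)).det := by
  rw [dsDetEven, ← one_mul (det _), ← det_transitionMatrix n, ← det_mul]
  congr 1
  ext i k
  rw [coe_orderIsoOfFin_apply, mul_apply,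
    ← coeff_rowPoly (by omega) (hle _ (B.orderEmbOfFin_mem hB k)), rowPoly_eq_sum,
    finsetSum_coeff]
  simp [basisMinor]

theorem forall_orderEmbOfFin_le_two_mul_add_one_iff {B : Finset ℕ} {N : ℕ} (hB : #B = N) :
    (∀ k : Fin N, B.orderEmbOfFin hB k ≤ 2 * (k : ℕ) + 1) ↔
      ∀ i ≤ 2 * N, i ≤ 2 * #(B.filter (· ≤ i)) := by
  simp_rw [orderEmbOfFin_le_iff_lt_card_filter]
  constructor
  · intro h i hi
    by_contra! hlt
    have hc : #(B.filter (· ≤ i)) < N := by omega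
    have hmono : #(B.filter (· ≤ 2 * #(B.filter (· ≤ i)) + 1)) ≤ #(B.filter (· ≤ i)) :=
      card_le_card fun x hx => by
        simp only [mem_filter] at hx ⊢
        exact ⟨hx.1, by omega⟩
    have := h ⟨_, hc⟩
    simp only at this
    omega
  · intro h k
    have := h (2 * k + 1) (by omega)
    omega

section DyckWords

open DyckStep

def stepsOf (L : ℕ) (B : Finset ℕ) : List DyckStep :=
  (List.range L).map fun t => if t + 1 ∈ B then U else D

def upSet (l : List DyckStep) : Finset ℕ :=
  ((range l.length).filter fun t => l[t]? = some U).map (addRightEmbedding 1)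

theorem length_stepsOf (L : ℕ) (B : Finset ℕ) : (stepsOf L B).length = L := by
  simp [stepsOf]

theorem mem_upSet {l : List DyckStep} {x : ℕ} :
    x ∈ upSet l ↔ 0 < x ∧ l[x - 1]? = some U := by
  simp only [upSet, mem_map, mem_filter, mem_range, addRightEmbedding_apply]
  constructor
  · rintro ⟨t, ⟨-, ht⟩, rfl⟩
    simpa using ht
  · rintro ⟨hx, hU⟩
    refine ⟨x - 1, ⟨?_, hU⟩, by omega⟩
    exact (List.getElem?_eq_some_iff.mp hU).1

theorem upSet_subset_Icc (l : List DyckStep) : upSet l ⊆ Icc 1 l.length := fun x hx => by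
  obtain ⟨hx, hU⟩ := mem_upSet.mp hx
  have := (List.getElem?_eq_some_iff.mp hU).1
  exact mem_Icc.mpr ⟨hx, by omega⟩

theorem stepsOf_upSet (l : List DyckStep) : stepsOf l.length (upSet l) = l := by
  refine List.ext_getElem (by simp [stepsOf]) fun t h₁ h₂ => ?_
  simp only [stepsOf, List.getElem_map, List.getElem_range, mem_upSet, Nat.add_sub_cancel,
    List.getElem?_eq_getElem h₂, Option.some.injEq]
  rcases l[t].dichotomy with h | h <;> simp [h]

theorem upSet_stepsOf {L : ℕ} {B : Finset ℕ} (hB : B ⊆ Icc 1 L) :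
    upSet (stepsOf L B) = B := by
  ext x
  rw [mem_upSet]
  constructor
  · rintro ⟨hx, hU⟩
    obtain ⟨h, hU⟩ := List.getElem?_eq_some_iff.mp hU
    simp only [stepsOf, List.getElem_map, List.getElem_range, Nat.sub_add_cancel hx] at hU
    by_contra hxB
    simp [hxB] at hU
  · intro hxB
    have := mem_Icc.mp (hB hxB)
    refine ⟨by omega, ?_⟩
    simp [stepsOf, List.getElem?_map, List.getElem?_range (show x - 1 < L by omega),
      Nat.sub_add_cancel this.1, hxB]

theorem count_U_map_range {B : Finset ℕ} (h0 : 0 ∉ B) (m : ℕ) :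
    ((List.range m).map fun t => if t + 1 ∈ B then U else D).count U =
      #(B.filter (· ≤ m)) := by
  induction m with
  | zero =>
    simp only [List.range_zero, List.map_nil, List.count_nil, nonpos_iff_eq_zero]
    symm
    rw [Finset.card_eq_zero, filter_eq_empty_iff]
    intro x hx hx0
    obtain rfl : x = 0 := by omega
    exact h0 hx
  | succ m ih =>
    have hsplit : B.filter (· ≤ m + 1) = B.filter (· ≤ m) ∪ B.filter (· = m + 1) := by
      ext x
      simp only [mem_filter, mem_union, ← and_or_left]
      exact and_congr_right fun _ => by omega
    rw [List.range_succ, List.map_append, List.count_append, ih, hsplit,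
      card_union_of_disjoint (disjoint_filter.mpr fun x _ h₁ h₂ => by omega), filter_eq']
    split_ifs with h <;> simp [h]

theorem count_U_take_stepsOf {L : ℕ} {B : Finset ℕ} (hB : B ⊆ Icc 1 L) (i : ℕ) :
    ((stepsOf L B).take i).count U = #(B.filter (· ≤ i)) := by
  rw [stepsOf, ← List.map_take, List.take_range,
    count_U_map_range (fun h => by simpa using hB h)]
  congr 1
  refine filter_congr fun x hx => ?_
  have := (mem_Icc.mp (hB hx)).2
  omega

theorem count_U_add_count_D (l : List DyckStep) : l.count U + l.count D = l.length := by
  induction l with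
  | nil => rfl
  | cons s l ih => cases s <;> simp <;> omega

theorem count_U_take_eq_card_filter_upSet (l : List DyckStep) (i : ℕ) :
    (l.take i).count U = #((upSet l).filter (· ≤ i)) := by
  conv_lhs => rw [← stepsOf_upSet l]
  exact count_U_take_stepsOf (upSet_subset_Icc l) i

theorem card_upSet (l : List DyckStep) : #(upSet l) = l.count U := by
  have h := count_U_take_eq_card_filter_upSet l l.length
  rwa [List.take_length, filter_true_of_mem fun x hx => (mem_Icc.mp (upSet_subset_Icc l hx)).2,
    eq_comm] at h

def dyckWordOfBallot {L : ℕ} {B : Finset ℕ} (hB : B ⊆ Icc 1 L) (hcard : 2 * #B = L)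
    (hballot : ∀ i ≤ L, i ≤ 2 * #(B.filter (· ≤ i))) : DyckWord where
  toList := stepsOf L B
  count_U_eq_count_D := by
    have h := count_U_add_count_D (stepsOf L B)
    rw [← card_upSet, upSet_stepsOf hB, length_stepsOf] at h
    rw [← card_upSet, upSet_stepsOf hB]
    omega
  count_D_le_count_U i := by
    have h := count_U_add_count_D ((stepsOf L B).take i)
    rw [count_U_take_stepsOf hB] at h ⊢
    rw [List.length_take, length_stepsOf] at h
    rcases le_total i L with hi | hi
    · have := hballot i hi
      omega
    · have : #(B.filter (· ≤ i)) = #B :=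
        congrArg card (filter_true_of_mem fun x hx => (mem_Icc.mp (hB hx)).2.trans hi)
      omega

theorem semilength_dyckWordOfBallot {L : ℕ} {B : Finset ℕ} (hB : B ⊆ Icc 1 L)
    (hcard : 2 * #B = L) (hballot : ∀ i ≤ L, i ≤ 2 * #(B.filter (· ≤ i))) :
    (dyckWordOfBallot hB hcard hballot).semilength = #B := by
  have := (dyckWordOfBallot hB hcard hballot).two_mul_semilength_eq_length
  rw [show (dyckWordOfBallot hB hcard hballot).toList = stepsOf L B from rfl,
    length_stepsOf] at this
  omega

theorem upSet_subset_Icc_pred (p : DyckWord) :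
    upSet p.toList ⊆ Icc 1 (p.toList.length - 1) := by
  intro x hx
  obtain ⟨hx0, hU⟩ := mem_upSet.mp hx
  obtain ⟨hlt, hU⟩ := List.getElem?_eq_some_iff.mp hU
  refine mem_Icc.mpr ⟨hx0, Nat.le_sub_one_of_lt (lt_of_le_of_ne (by omega) fun hlast => ?_)⟩
  have hne : p.toList ≠ [] := List.ne_nil_of_length_pos (by omega)
  have := p.getLast_eq_D hne
  rw [List.getLast_eq_getElem] at this
  simp_all

theorem le_two_mul_card_filter_upSet (p : DyckWord) {i : ℕ} (hi : i ≤ p.toList.length) :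
    i ≤ 2 * #((upSet p.toList).filter (· ≤ i)) := by
  have h := count_U_add_count_D (p.toList.take i)
  have := p.count_D_le_count_U i
  rw [List.length_take, min_eq_left hi] at h
  rw [← count_U_take_eq_card_filter_upSet]
  omega

theorem ncard_ballot_eq_catalan (n : ℕ) :
    {B : Finset ℕ | B ⊆ Icc 1 (2 * n + 1) ∧
      ∃ hB : #B = n + 1, ∀ k : Fin (n + 1), B.orderEmbOfFin hB k ≤ 2 * (k : ℕ) + 1}.ncard =
      catalan (n + 1) := by
  have hdyck : {p : DyckWord | p.semilength = n + 1}.ncard = catalan (n + 1) := by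
    rw [← Nat.card_coe_set_eq, ← DyckWord.card_dyckWord_semilength_eq_catalan,
      ← Nat.card_eq_fintype_card]
    rfl
  rw [← hdyck]
  have hlength : ∀ p : DyckWord, p.semilength = n + 1 → p.toList.length = 2 * (n + 1) :=
    fun p hp => hp ▸ p.two_mul_semilength_eq_length.symm
  symm
  refine Set.ncard_congr (fun p _ => upSet p.toList) (fun p hp => ?_) (fun p q hp hq hpq => ?_)
    fun B ⟨hB, hcard, hballot⟩ => ?_
  · have hcard : #(upSet p.toList) = n + 1 := (card_upSet _).trans hp
    refine ⟨(upSet_subset_Icc_pred p).trans (Icc_subset_Icc_right ?_), hcard,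
      (forall_orderEmbOfFin_le_two_mul_add_one_iff hcard).mpr fun i hi =>
        le_two_mul_card_filter_upSet p (by rw [hlength p hp]; exact hi)⟩
    rw [hlength p hp]
    omega
  · refine DyckWord.ext ?_
    rw [← stepsOf_upSet p.toList, ← stepsOf_upSet q.toList, hlength p hp, hlength q hq]
    exact congrArg _ hpq
  · have hB' : B ⊆ Icc 1 (2 * (n + 1)) := hB.trans (Icc_subset_Icc_right (by omega))
    have hcard' : 2 * #B = 2 * (n + 1) := by rw [hcard]
    have hballot' := (forall_orderEmbOfFin_le_two_mul_add_one_iff hcard).mp hballot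
    refine ⟨dyckWordOfBallot hB' hcard' hballot', ?_, upSet_stepsOf hB'⟩
    rw [Set.mem_ofPred_eq, semilength_dyckWordOfBallot, hcard]

end DyckWords

end DehnSommerville

theorem card_dsEven_bases_eq_catalan_general (n : ℕ) :
    {B : Finset ℕ | B ⊆ Finset.Icc 1 (2 * n + 1) ∧
        ∃ hB : B.card = n + 1, dsDetEven n B hB ≠ 0}.ncard = catalan (n + 1) := by
  rw [← DehnSommerville.ncard_ballot_eq_catalan]
  congr 1
  ext B
  refine and_congr_right fun hsub => exists_congr fun hB => ?_
  have hmem : ∀ b ∈ B, 1 ≤ b ∧ b ≤ 2 * n + 1 := fun b hb => Finset.mem_Icc.mp (hsub hb)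
  rw [DehnSommerville.dsDetEven_eq_det_basisMinor hB fun b hb => (hmem b hb).2.trans (by omega)]
  exact DehnSommerville.det_basisMinor_ne_zero_iff (B.orderEmbOfFin hB).strictMono
    fun k => (hmem _ (B.orderEmbOfFin_mem hB k)).1

/-- **Theorem.** For every `n ≥ 1`, the number of `(n+1)`-subsets of `{1,…,2n+1}` giving an
invertible submatrix of `M_{2n}` equals the Catalan number `C_{n+1}`. -/
theorem card_dsEven_bases_eq_catalan (n : ℕ) (hn : 1 ≤ n) :
    {B : Finset ℕ | B ⊆ Finset.Icc 1 (2 * n + 1) ∧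
        ∃ hB : B.card = n + 1, dsDetEven n B hB ≠ 0}.ncard = catalan (n + 1) :=
  card_dsEven_bases_eq_catalan_general n
end

section
/- Let n ≥ 1 and let B be an (n+1)-element subset of {1, 2, ..., 2n+1}. If the (n+1)×(n+1) submatrix of M_{2n} on the columns labeled by B has nonzero determinant, then 1 ∈ B. (That is, the element 1 is a coloop of the Dehn–Sommerville matroid DS_{2n}: it lies in every basis.) -/
open Finset

theorem Int.alternating_sum_range_choose_mul_choose_of_ne {N m : ℕ} (h : m ≠ N) :
    ∑ k ∈ Finset.range (N + 1), (-1 : ℤ) ^ k * N.choose k * k.choose m = 0 := by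
  rcases lt_or_gt_of_ne h with hlt | hgt
  · obtain ⟨d, rfl⟩ : ∃ d, N = m + d := ⟨N - m, by omega⟩
    have low : ∑ k ∈ Finset.range m, (-1 : ℤ) ^ k * (m + d).choose k * k.choose m = 0 :=
      sum_eq_zero fun k hk => by simp [Nat.choose_eq_zero_of_lt (mem_range.1 hk)]
    have high (j : ℕ) : (-1 : ℤ) ^ (m + j) * (m + d).choose (m + j) * (m + j).choose m =
        (-1) ^ m * (m + d).choose m * ((-1) ^ j * d.choose j) := by
      have key := Nat.choose_mul (n := m + d) (Nat.le_add_right m j)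
      simp only [Nat.add_sub_cancel_left] at key
      rw [pow_add, mul_mul_mul_comm, mul_assoc, ← Nat.cast_mul, key, Nat.cast_mul]
    rw [add_assoc, sum_range_add, low, zero_add, sum_congr rfl fun j _ => high j, ← mul_sum,
      Int.alternating_sum_range_choose_of_ne (by omega), mul_zero]
  · refine sum_eq_zero fun k hk => ?_
    rw [Nat.choose_eq_zero_of_lt (lt_of_lt_of_le (mem_range.1 hk) hgt), Nat.cast_zero, mul_zero]

theorem Finset.sum_range_two_mul_add_two {M : Type*} [AddCommMonoid M] (f : ℕ → M) (n : ℕ) :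
    ∑ k ∈ range (2 * n + 2), f k = ∑ i ∈ range (n + 1), (f i + f (2 * n + 1 - i)) := by
  rw [show 2 * n + 2 = (n + 1) + (n + 1) by omega, sum_range_add, sum_add_distrib,
    ← sum_range_reflect (fun x => f (n + 1 + x))]
  congr 1
  exact sum_congr rfl fun i hi => by
    rw [show n + 1 + (n + 1 - 1 - i) = 2 * n + 1 - i by have := mem_range.1 hi; omega]

theorem Odd.neg_one_pow_sub {R : Type*} [Monoid R] [HasDistribNeg R] {N i : ℕ} (hN : Odd N)
    (hi : i ≤ N) : (-1 : R) ^ (N - i) = -(-1) ^ i :=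
  calc (-1 : R) ^ (N - i) = (-1) ^ (N - i) * ((-1) ^ i * (-1) ^ i) := by
        rw [← pow_add, Even.neg_one_pow ⟨i, rfl⟩, mul_one]
    _ = (-1) ^ N * (-1) ^ i := by rw [← mul_assoc, ← pow_add, Nat.sub_add_cancel hi]
    _ = -(-1) ^ i := by rw [hN.neg_one_pow, neg_one_mul]

theorem sum_range_neg_one_pow_mul_choose_mul_sub_choose {n m : ℕ} (hm : m ≠ 2 * n + 1) :
    ∑ i ∈ range (n + 1), (-1 : ℤ) ^ i * (2 * n + 1).choose i *
      (((2 * n + 1 - i).choose m : ℤ) - i.choose m) = 0 := by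
  have total := Int.alternating_sum_range_choose_mul_choose_of_ne hm
  rw [sum_range_two_mul_add_two] at total
  rw [← neg_eq_zero, ← total, ← sum_neg_distrib]
  refine sum_congr rfl fun i hi => ?_
  have hi : i ≤ 2 * n + 1 := by have := mem_range.1 hi; omega
  rw [(odd_two_mul_add_one n).neg_one_pow_sub hi, Nat.choose_symm hi]
  ring

theorem one_mem_of_dsEven_basis_general (n : ℕ) (B : Finset ℕ)
    (hB : B.card = n + 1)
    (hdet : dsDetEven n B hB ≠ 0) : 1 ∈ B := by
  by_contra h1
  refine hdet (Matrix.exists_vecMul_eq_zero_iff.1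
    ⟨fun i : Fin (n + 1) => (-1 : ℤ) ^ (i : ℕ) * (2 * n + 1).choose i, fun hv => ?_, ?_⟩)
  · simpa using congrFun hv 0
  · funext k
    have hb : (B.orderIsoOfFin hB k : ℕ) ≠ 1 := fun h => h1 (h ▸ (B.orderIsoOfFin hB k).2)
    simp only [Matrix.vecMul, dotProduct, Pi.zero_apply]
    rw [Fin.sum_univ_eq_sum_range
      (fun i => (-1 : ℤ) ^ i * (2 * n + 1).choose i *
        (((2 * n + 1 - i).choose (2 * n + 2 - B.orderIsoOfFin hB k) : ℤ) -
          i.choose (2 * n + 2 - B.orderIsoOfFin hB k)))]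
    exact sum_range_neg_one_pow_mul_choose_mul_sub_choose (by omega)

/-- **Lemma (1 is a coloop of `DS_{2n}`).**
Let `n ≥ 1` and let `B` be an `(n+1)`-element subset of `{1,…,2n+1}`.  If the submatrix
of `M_{2n}` on the columns labeled by `B` has nonzero determinant, then `1 ∈ B`. -/
theorem one_mem_of_dsEven_basis (n : ℕ) (hn : 1 ≤ n) (B : Finset ℕ)
    (hB : B.card = n + 1) (hsub : B ⊆ Finset.Icc 1 (2 * n + 1))
    (hdet : dsDetEven n B hB ≠ 0) : 1 ∈ B :=
  one_mem_of_dsEven_basis_general n B hB hdet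
end

section
/- Let n ≥ 1 and suppose B = {b_1 < b_2 < ... < b_{n+1}} is an (n+1)-element subset of {1, 2, ..., 2n+1} such that b_k ≥ 2k for some k with 1 ≤ k ≤ n+1. Then the columns of M_{2n} labeled by B, regarded as vectors in ℚ^{n+1} (the column labeled b having entries C(2n+1-i, 2n+2-b) - C(i, 2n+2-b) for i = 0,...,n), are linearly dependent. -/
open Polynomial Finset Submodule

/-! With `a = (2n+1)/2` and `c = 2n+2-b`, the entry of column `b` in row `i` is `F(a - i)`, where
`F(x) = C(a+x, c) - C(a-x, c)` is an odd polynomial of degree at most `c`. An odd polynomial of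
degree at most `2m` is a combination of `x, x³, …, x^(2m-1)`, so all columns with `c ≤ 2m` lie in
the span of `m` fixed vectors. If `b k₀ ≥ 2k₀ + 2` (0-indexed), the `n - k₀ + 1` columns `k ≥ k₀`
all have `c ≤ 2(n - k₀)`, hence are dependent. -/

theorem Finset.sum_range_two_mul_add_one_of_even_eq_zero {M : Type*} [AddCommMonoid M]
    {f : ℕ → M} (hf : ∀ j, f (2 * j) = 0) (m : ℕ) :
    ∑ k ∈ range (2 * m + 1), f k = ∑ j ∈ range m, f (2 * j + 1) := by
  induction m with
  | zero => simp [hf 0]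
  | succ m ih =>
    rw [show 2 * (m + 1) + 1 = 2 * m + 1 + 1 + 1 by ring, sum_range_succ, sum_range_succ, ih,
      sum_range_succ, show 2 * m + 1 + 1 = 2 * (m + 1) by ring, hf, add_zero]

namespace Polynomial

theorem coeff_comp_neg_X {R : Type*} [CommRing R] (p : R[X]) (k : ℕ) :
    (p.comp (-X)).coeff k = p.coeff k * (-1) ^ k := by
  rw [← comp_C_mul_X_coeff, map_neg, map_one, neg_one_mul]

variable {R : Type*} [CommRing R] [NoZeroDivisors R] [CharZero R] {p : R[X]}

theorem coeff_eq_zero_of_comp_neg_X_eq_neg (hp : p.comp (-X) = -p) {k : ℕ} (hk : Even k) :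
    p.coeff k = 0 := by
  have hk' := congrArg (coeff · k) hp
  simp only [coeff_comp_neg_X, hk.neg_one_pow, mul_one, coeff_neg] at hk'
  exact CharZero.eq_neg_self_iff.mp hk'

theorem eval_eq_sum_odd_of_comp_neg_X_eq_neg (hp : p.comp (-X) = -p) {m : ℕ}
    (hdeg : p.natDegree ≤ 2 * m) (y : R) :
    p.eval y = ∑ j ∈ range m, p.coeff (2 * j + 1) * y ^ (2 * j + 1) := by
  rw [eval_eq_sum_range' (Nat.lt_succ_of_le hdeg)]
  exact sum_range_two_mul_add_one_of_even_eq_zero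
    (fun j ↦ by rw [coeff_eq_zero_of_comp_neg_X_eq_neg hp (even_two_mul j), zero_mul]) m

theorem eval_mem_span_odd_pow_of_comp_neg_X_eq_neg (hp : p.comp (-X) = -p) {m : ℕ}
    (hdeg : p.natDegree ≤ 2 * m) {ι : Type*} (x : ι → R) :
    (fun i ↦ p.eval (x i)) ∈ span R (Set.range fun (j : Fin m) i ↦ x i ^ (2 * (j : ℕ) + 1)) := by
  have hsum : (fun i ↦ p.eval (x i)) =
      ∑ j : Fin m, p.coeff (2 * j + 1) • fun i ↦ x i ^ (2 * (j : ℕ) + 1) := by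
    ext i
    simp only [eval_eq_sum_odd_of_comp_neg_X_eq_neg hp hdeg, Finset.sum_apply, Pi.smul_apply,
      smul_eq_mul, Fin.sum_univ_eq_sum_range (fun j ↦ p.coeff (2 * j + 1) * x i ^ (2 * j + 1))]
  rw [hsum]
  exact sum_mem fun j _ ↦ smul_mem _ _ (subset_span ⟨j, rfl⟩)

end Polynomial

variable {K : Type*} [Field K]

theorem not_linearIndependent_of_forall_mem_span {ι κ V : Type*} [Fintype κ] [AddCommGroup V]
    [Module K V] {v : ι → V} {w : κ → V} (s : Finset ι)
    (hs : ∀ i ∈ s, v i ∈ span K (Set.range w)) (hcard : Fintype.card κ < #s) :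
    ¬ LinearIndependent K v := by
  intro hv
  have hrank := finrank_span_eq_card (hv.comp ((↑) : s → ι) Subtype.val_injective)
  have hle : span K (Set.range (v ∘ ((↑) : s → ι))) ≤ span K (Set.range w) :=
    span_le.mpr (by rintro _ ⟨i, rfl⟩; exact hs i i.2)
  have := FiniteDimensional.span_of_finite K (Set.finite_range w)
  have := (finrank_mono hle).trans (finrank_range_le_card w)
  simp only [Fintype.card_coe] at hrank
  omega

variable (K) in
noncomputable def choosePoly (c : ℕ) : K[X] := C (c.factorial : K)⁻¹ * descPochhammer K c

theorem choosePoly_eval_natCast [CharZero K] (c N : ℕ) :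
    (choosePoly K c).eval (N : K) = N.choose c := by
  rw [choosePoly, eval_mul, eval_C, descPochhammer_eval_eq_descFactorial,
    Nat.descFactorial_eq_factorial_mul_choose, Nat.cast_mul,
    inv_mul_cancel_left₀ (Nat.cast_ne_zero.mpr c.factorial_ne_zero)]

theorem natDegree_choosePoly_le (c : ℕ) : (choosePoly K c).natDegree ≤ c :=
  (natDegree_C_mul_le _ _).trans (descPochhammer_natDegree K c).le

variable (K) in
noncomputable def oddChoosePoly (a : K) (c : ℕ) : K[X] :=
  (choosePoly K c).comp (C a + X) - (choosePoly K c).comp (C a - X)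

theorem oddChoosePoly_comp_neg_X (a : K) (c : ℕ) :
    (oddChoosePoly K a c).comp (-X) = -oddChoosePoly K a c := by
  simp only [oddChoosePoly, sub_comp, comp_assoc, add_comp, C_comp, X_comp, ← sub_eq_add_neg,
    sub_neg_eq_add]
  ring

theorem natDegree_oddChoosePoly_le (a : K) (c : ℕ) : (oddChoosePoly K a c).natDegree ≤ c := by
  have hcomp {q : K[X]} (hq : q.natDegree ≤ 1) : ((choosePoly K c).comp q).natDegree ≤ c :=
    natDegree_comp_le.trans (by simpa using Nat.mul_le_mul (natDegree_choosePoly_le c) hq)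
  exact (natDegree_sub_le _ _).trans
    (max_le (hcomp (by compute_degree)) (hcomp (by compute_degree)))

theorem choose_sub_choose_eq_eval_oddChoosePoly [CharZero K] {N i : ℕ} (hi : i ≤ N) (c : ℕ) :
    ((N - i).choose c : K) - (i.choose c : K) =
      (oddChoosePoly K ((N : K) / 2) c).eval ((N : K) / 2 - i) := by
  rw [oddChoosePoly, eval_sub, eval_comp, eval_comp]
  simp only [eval_add, eval_sub, eval_C, eval_X, sub_sub_cancel, ← add_sub_assoc, add_halves]
  rw [← Nat.cast_sub hi, choosePoly_eval_natCast, choosePoly_eval_natCast]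

theorem dsEven_columns_dependent_general (n : ℕ)
    (b : Fin (n + 1) → ℕ) (hmono : StrictMono b)
    (hbig : ∃ k : Fin (n + 1), 2 * (k : ℕ) + 2 ≤ b k) :
    ¬ LinearIndependent ℚ (fun k : Fin (n + 1) => fun i : Fin (n + 1) =>
        ((Nat.choose (2 * n + 1 - (i : ℕ)) (2 * n + 2 - b k) : ℚ)
          - (Nat.choose (i : ℕ) (2 * n + 2 - b k) : ℚ))) := by
  obtain ⟨k₀, hk₀⟩ := hbig
  set a : ℚ := ((2 * n + 1 : ℕ) : ℚ) / 2
  refine not_linearIndependent_of_forall_mem_span (Ici k₀)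
    (w := fun (j : Fin (n - k₀)) (i : Fin (n + 1)) ↦ (a - (i : ℕ)) ^ (2 * (j : ℕ) + 1)) ?_ ?_
  · intro k hk
    have hbk : b k₀ ≤ b k := hmono.monotone (mem_Ici.mp hk)
    have hcol : (fun i : Fin (n + 1) ↦ ((2 * n + 1 - (i : ℕ)).choose (2 * n + 2 - b k) : ℚ)
        - ((i : ℕ).choose (2 * n + 2 - b k) : ℚ)) =
        fun i : Fin (n + 1) ↦ (oddChoosePoly ℚ a (2 * n + 2 - b k)).eval (a - (i : ℕ)) :=
      funext fun i ↦ choose_sub_choose_eq_eval_oddChoosePoly (by omega) _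
    rw [hcol]
    exact eval_mem_span_odd_pow_of_comp_neg_X_eq_neg (oddChoosePoly_comp_neg_X _ _)
      ((natDegree_oddChoosePoly_le _ _).trans (by omega)) _
  · rw [Fintype.card_fin, Fin.card_Ici]
    omega

/-- **Lemma (bottleneck: columns are dependent).**
Let `n ≥ 1` and let `B = {b_1 < ⋯ < b_{n+1}} ⊆ {1,…,2n+1}` (here `b` is the strictly
increasing enumeration, 0-indexed, so `b k` is `b_{k+1}`).  If `b_k ≥ 2k` for some
`1 ≤ k ≤ n+1` (0-indexed: `b k ≥ 2k+2`), then the columns of `M_{2n}` labeled by `B`,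
viewed as vectors in `ℚ^{n+1}`, are linearly dependent. -/
theorem dsEven_columns_dependent (n : ℕ) (hn : 1 ≤ n)
    (b : Fin (n + 1) → ℕ) (hmono : StrictMono b)
    (hlb : ∀ k, 1 ≤ b k) (hub : ∀ k, b k ≤ 2 * n + 1)
    (hbig : ∃ k : Fin (n + 1), 2 * (k : ℕ) + 2 ≤ b k) :
    ¬ LinearIndependent ℚ (fun k : Fin (n + 1) => fun i : Fin (n + 1) =>
        ((Nat.choose (2 * n + 1 - (i : ℕ)) (2 * n + 2 - b k) : ℚ)
          - (Nat.choose (i : ℕ) (2 * n + 2 - b k) : ℚ))) :=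
  dsEven_columns_dependent_general n b hmono hbig
end
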